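/- arXiv:2302.14324 — 6 statements merged into one kernel-verified Lean document; each statement's English description precedes it below -/
import Mathlib

section
/- For every n ≥ 0 and every sequence of phase factors Φ = (φ_0, …, φ_n) ∈ ℝ^{n+1}, there exist polynomials p, q ∈ ℂ[X] with deg p ≤ n and deg q ≤ n − 1, where p has the same parity as n and q has the same parity as n − 1 (a polynomial r is even if r(−x) = r(x) for all x and odd if r(−x) = −r(x) for all x), such that for every x ∈ [−1, 1], the 2×2 matrix QSP(Φ, x) equals the matrix with rows (p(x), q*(−x)·√(1−x²)) and (q(x)·√(1−x²), p*(−x)), where p* and q* denote the polynomials obtained from p and q by conjugating every coefficient. -/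
/-!
Write `s = √(1 - x²)` and `r♯ = r*(-X)`. Multiplying a matrix of the shape
`[[p(x), q♯(x) s], [q(x) s, p♯(x)]]` on the right by `R(x) · diag(e^{iφ}, e^{-iφ})` gives a
matrix of the same shape, with `p' = e^{iφ} (X p + (1 - X²) q♯)` and `q' = e^{iφ} (X q + p♯)`:
the only relation needed is `s² = 1 - x²`, valid for `x ∈ [-1, 1]`. Since `♯` is a ring
homomorphism with `X♯ = -X`, this recurrence raises `deg p` and `deg q` by at most one and flips
both parities, starting from `p = e^{iφ₀}`, `q = 0`.
-/

open Matrix Complex Polynomial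

/-- The reflection matrix `R(x)` appearing in quantum signal processing. -/
noncomputable def Rmat (x : ℝ) : Matrix (Fin 2) (Fin 2) ℂ :=
  !![(x : ℂ), (Real.sqrt (1 - x ^ 2) : ℂ); (Real.sqrt (1 - x ^ 2) : ℂ), -(x : ℂ)]

/-- The phase matrix `diag(e^{iφ}, e^{-iφ})`. -/
noncomputable def phaseMat (φ : ℝ) : Matrix (Fin 2) (Fin 2) ℂ :=
  !![Complex.exp (φ * Complex.I), 0; 0, Complex.exp (-(φ * Complex.I))]

/-- The quantum signal processing matrix
`QSP(Φ, x) = e^{iφ₀σ_z} ∏_{j=1}^n R(x) e^{iφ_jσ_z}`, product from `j = 1` on the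
left to `j = n` on the right. -/
noncomputable def QSP (n : ℕ) (Φ : ℕ → ℝ) (x : ℝ) : Matrix (Fin 2) (Fin 2) ℂ :=
  phaseMat (Φ 0) * ((List.range n).map (fun j => Rmat x * phaseMat (Φ (j + 1)))).prod

namespace Polynomial

section Parity

variable {R : Type*} [CommRing R]

def HasParity (n : ℕ) (r : R[X]) : Prop := r.comp (-X) = (-1) ^ n * r

theorem HasParity.eval_neg {n : ℕ} {r : R[X]} (h : HasParity n r) (z : R) :
    r.eval (-z) = (-1) ^ n * r.eval z := by
  simpa using congrArg (eval z) h

theorem hasParity_zero (n : ℕ) : HasParity n (0 : R[X]) := by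
  simp [HasParity]

end Parity

variable {R : Type*} [CommRing R] [StarRing R]

/-- The paper's `r*(-X)`. -/
noncomputable def conjNeg : R[X] →+* R[X] :=
  (compRingHom (-X)).comp (mapRingHom (starRingEnd R))

theorem conjNeg_apply (r : R[X]) : conjNeg r = (r.map (starRingEnd R)).comp (-X) := rfl

@[simp] theorem conjNeg_C (a : R) : conjNeg (C a) = C (star a) := by
  simp [conjNeg_apply, starRingEnd_apply]

@[simp] theorem conjNeg_X : conjNeg (X : R[X]) = -X := by
  simp [conjNeg_apply]

@[simp] theorem conjNeg_conjNeg (r : R[X]) : conjNeg (conjNeg r) = r := by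
  suffices h : conjNeg.comp conjNeg = RingHom.id R[X] from congrArg (· r) h
  exact ringHom_ext (by simp) (by simp)

theorem conjNeg_comp_neg_X (r : R[X]) : conjNeg (r.comp (-X)) = (conjNeg r).comp (-X) := by
  suffices h : conjNeg.comp (compRingHom (-X)) = (compRingHom (-X)).comp (conjNeg (R := R)) from
    congrArg (· r) h
  exact ringHom_ext (by simp) (by simp)

theorem eval_conjNeg (r : R[X]) (z : R) :
    (conjNeg r).eval z = (r.map (starRingEnd R)).eval (-z) := by
  simp [conjNeg_apply, eval_comp]

theorem degree_conjNeg_le (r : R[X]) : (conjNeg r).degree ≤ r.degree := by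
  rw [conjNeg_apply, degree_comp_neg_X]
  exact degree_map_le

theorem HasParity.conjNeg {n : ℕ} {r : R[X]} (h : HasParity n r) : HasParity n (conjNeg r) := by
  rw [HasParity, ← conjNeg_comp_neg_X, h]
  simp

end Polynomial

section

variable {R : Type*} [CommRing R] [StarRing R]

noncomputable def qspStep (c : R) (pq : R[X] × R[X]) : R[X] × R[X] :=
  (C c * (X * pq.1 + (1 - X ^ 2) * conjNeg pq.2), C c * (X * pq.2 + conjNeg pq.1))

theorem degree_qspStep_le {n : ℕ} (c : R) {pq : R[X] × R[X]} (hp : pq.1.degree ≤ n)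
    (hq : pq.2.degree < n) :
    (qspStep c pq).1.degree ≤ ↑(n + 1) ∧ (qspStep c pq).2.degree < ↑(n + 1) := by
  have hq1 : pq.2.degree + 1 ≤ n := Nat.WithBot.add_one_le_of_lt hq
  have hC (r : R[X]) : (C c * r).degree ≤ r.degree :=
    (degree_mul_le _ _).trans (by simpa using add_le_add_left (degree_C_le (a := c)) r.degree)
  have hX (r : R[X]) : (X * r).degree ≤ r.degree + 1 :=
    (degree_mul_le _ _).trans (by rw [add_comm]; gcongr; exact degree_X_le)
  have h1X2 : (1 - X ^ 2 : R[X]).degree ≤ 2 := by compute_degree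
  rw [Nat.cast_succ]
  constructor
  · refine (hC _).trans <| (degree_add_le _ _).trans <| max_le ((hX _).trans (by gcongr)) ?_
    calc ((1 - X ^ 2) * conjNeg pq.2).degree ≤ 2 + pq.2.degree :=
          (degree_mul_le _ _).trans (add_le_add h1X2 (degree_conjNeg_le _))
      _ = pq.2.degree + 1 + 1 := by rw [add_comm, add_assoc]; rfl
      _ ≤ n + 1 := by gcongr
  · refine lt_of_le_of_lt ((hC _).trans <| (degree_add_le _ _).trans <|
      max_le ((hX _).trans hq1) ((degree_conjNeg_le _).trans hp)) ?_
    exact_mod_cast Nat.lt_succ_self n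

theorem hasParity_qspStep {n : ℕ} (c : R) {pq : R[X] × R[X]} (hp : HasParity n pq.1)
    (hq : HasParity (n + 1) pq.2) :
    HasParity (n + 1) (qspStep c pq).1 ∧ HasParity (n + 2) (qspStep c pq).2 := by
  have hp' := hp.conjNeg
  have hq' := hq.conjNeg
  rw [HasParity] at hp hq hp' hq'
  constructor
  · simp only [HasParity, qspStep, mul_comp, add_comp, C_comp, X_comp, sub_comp,
      one_comp, pow_comp, hp, hq']
    ring
  · simp only [HasParity, qspStep, mul_comp, add_comp, C_comp, X_comp, hq, hp']
    ring

end

noncomputable def qspPolys (Φ : ℕ → ℝ) : ℕ → ℂ[X] × ℂ[X]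
  | 0 => (C (exp (Φ 0 * I)), 0)
  | n + 1 => qspStep (exp (Φ (n + 1) * I)) (qspPolys Φ n)

noncomputable def qspMatrix (pq : ℂ[X] × ℂ[X]) (x : ℝ) : Matrix (Fin 2) (Fin 2) ℂ :=
  !![pq.1.eval ↑x, (conjNeg pq.2).eval ↑x * √(1 - x ^ 2);
     pq.2.eval ↑x * √(1 - x ^ 2), (conjNeg pq.1).eval ↑x]

theorem star_exp_ofReal_mul_I (φ : ℝ) : star (exp (φ * I)) = exp (-(φ * I)) := by
  rw [← starRingEnd_apply, ← exp_conj]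
  simp

theorem phaseMat_eq_qspMatrix (φ x : ℝ) : phaseMat φ = qspMatrix (C (exp (φ * I)), 0) x := by
  simp [phaseMat, qspMatrix, star_exp_ofReal_mul_I]

theorem qspMatrix_mul_Rmat_mul_phaseMat {x : ℝ} (hx : x ∈ Set.Icc (-1) 1) (pq : ℂ[X] × ℂ[X])
    (φ : ℝ) : qspMatrix pq x * (Rmat x * phaseMat φ) = qspMatrix (qspStep (exp (φ * I)) pq) x := by
  have hs : (√(1 - x ^ 2) : ℂ) ^ 2 = 1 - (x : ℂ) ^ 2 := by
    rw [← ofReal_pow, Real.sq_sqrt (by nlinarith [hx.1, hx.2])]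
    push_cast; ring
  simp only [qspMatrix, qspStep, Rmat, phaseMat, map_mul, map_add, map_sub, map_one, map_pow,
    conjNeg_C, conjNeg_X, conjNeg_conjNeg, star_exp_ofReal_mul_I, eval_mul, eval_add, eval_sub,
    eval_one, eval_pow, eval_C, eval_X, eval_neg, Matrix.mul_fin_two, EmbeddingLike.apply_eq_iff_eq,
    Matrix.vecCons_inj, and_true]
  refine ⟨⟨?_, ?_⟩, ?_, ?_⟩
  · linear_combination (conjNeg pq.2).eval (x : ℂ) * exp (φ * I) * hs
  · ring
  · ring
  · linear_combination pq.2.eval (x : ℂ) * exp (-(φ * I)) * hs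

theorem QSP_succ (n : ℕ) (Φ : ℕ → ℝ) (x : ℝ) :
    QSP (n + 1) Φ x = QSP n Φ x * (Rmat x * phaseMat (Φ (n + 1))) := by
  simp [QSP, List.range_succ, mul_assoc]

theorem QSP_eq_qspMatrix (n : ℕ) (Φ : ℕ → ℝ) {x : ℝ} (hx : x ∈ Set.Icc (-1) 1) :
    QSP n Φ x = qspMatrix (qspPolys Φ n) x := by
  induction n with
  | zero => simpa [QSP, qspPolys] using phaseMat_eq_qspMatrix (Φ 0) x
  | succ n ih => rw [QSP_succ, ih, qspMatrix_mul_Rmat_mul_phaseMat hx, qspPolys]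

theorem degree_qspPolys_le (Φ : ℕ → ℝ) (n : ℕ) :
    (qspPolys Φ n).1.degree ≤ n ∧ (qspPolys Φ n).2.degree < n := by
  induction n with
  | zero => simp [qspPolys]
  | succ n ih => exact degree_qspStep_le _ ih.1 ih.2

-- Parity `n + 1` for `q` is the paper's parity `n - 1`, free of truncated subtraction.
theorem hasParity_qspPolys (Φ : ℕ → ℝ) (n : ℕ) :
    HasParity n (qspPolys Φ n).1 ∧ HasParity (n + 1) (qspPolys Φ n).2 := by
  induction n with
  | zero => exact ⟨by simp [qspPolys, HasParity], hasParity_zero 1⟩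
  | succ n ih => exact hasParity_qspStep _ ih.1 ih.2

/-- **QSP as a recurrence** (Lemma A.1): the QSP circuit has entries described
by polynomials `p, q` of bounded degree and appropriate parity. -/
theorem qsp_recurrence (n : ℕ) (Φ : ℕ → ℝ) :
    ∃ p q : Polynomial ℂ,
      p.degree ≤ n ∧ q.degree < n ∧
      (Even n → ∀ x : ℂ, p.eval (-x) = p.eval x) ∧
      (Odd n → ∀ x : ℂ, p.eval (-x) = -p.eval x) ∧
      (Even n → ∀ x : ℂ, q.eval (-x) = -q.eval x) ∧
      (Odd n → ∀ x : ℂ, q.eval (-x) = q.eval x) ∧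
      ∀ x : ℝ, x ∈ Set.Icc (-1 : ℝ) 1 →
        QSP n Φ x =
          !![p.eval (x : ℂ),
              (q.map (starRingEnd ℂ)).eval (-(x : ℂ)) * (Real.sqrt (1 - x ^ 2) : ℂ);
             q.eval (x : ℂ) * (Real.sqrt (1 - x ^ 2) : ℂ),
              (p.map (starRingEnd ℂ)).eval (-(x : ℂ))] := by
  obtain ⟨hp, hq⟩ := hasParity_qspPolys Φ n
  refine ⟨_, _, (degree_qspPolys_le Φ n).1, (degree_qspPolys_le Φ n).2,
    fun h x => ?_, fun h x => ?_, fun h x => ?_, fun h x => ?_, fun x hx => ?_⟩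
  · rw [hp.eval_neg, h.neg_one_pow, one_mul]
  · rw [hp.eval_neg, h.neg_one_pow, neg_one_mul]
  · rw [hq.eval_neg, (h.add_one).neg_one_pow, neg_one_mul]
  · rw [hq.eval_neg, (h.add_one).neg_one_pow, one_mul]
  · rw [QSP_eq_qspMatrix n Φ hx, qspMatrix, eval_conjNeg, eval_conjNeg]
end

section
/- Let r ≥ 1, let c : Fin r → ℝ satisfy 0 ≤ c i ≤ 1 for all i, and set C = diagonal(c), S = diagonal(√(1 − (c i)²)), viewed as r×r complex matrices, and U = fromBlocks C S S (−C), a 2r×2r unitary matrix. Let Π be the 2r×2r projection fromBlocks I 0 0 0 onto the first r coordinates. Let n ≥ 1, Φ = (φ_0, …, φ_n) ∈ ℝ^{n+1}, and p ∈ ℂ[X] with deg p ≤ n such that for all x ∈ [−1, 1] the (0,0) entry of QSP(Φ, x) equals p(x). Then the top-left r×r block of the phased alternating sequence U_Φ (taken with Π_L = Π_R = Π) equals the diagonal matrix with entries p(c i). -/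
open Matrix Complex Polynomial

/-- `E(φ, Π) = e^{iφ}·Π + e^{-iφ}·(I - Π) = e^{iφ(2Π - I)}`. -/
noncomputable def Emat {m : Type*} [Fintype m] [DecidableEq m]
    (φ : ℝ) (P : Matrix m m ℂ) : Matrix m m ℂ :=
  Complex.exp (φ * Complex.I) • P + Complex.exp (-(φ * Complex.I)) • (1 - P)

/-- The phased alternating sequence `U_Φ` associated with a unitary `U`,
projections `Π_L, Π_R` and phases `φ_0, …, φ_n`. -/
noncomputable def phasedAltSeq {m : Type*} [Fintype m] [DecidableEq m]
    (U PL PR : Matrix m m ℂ) (n : ℕ) (Φ : ℕ → ℝ) : Matrix m m ℂ :=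
  if Odd n then
    Emat (Φ 0) PL * U * Emat (Φ 1) PR *
      ((List.range ((n - 1) / 2)).map
        (fun j => Uᴴ * Emat (Φ (2 * j + 2)) PL * U * Emat (Φ (2 * j + 3)) PR)).prod
  else
    Emat (Φ 0) PR *
      ((List.range (n / 2)).map
        (fun j => Uᴴ * Emat (Φ (2 * j + 1)) PL * U * Emat (Φ (2 * j + 2)) PR)).prod

/-!
Every matrix in sight is a 2×2 block matrix with diagonal blocks, and such block matrices
multiply like `r`-tuples of 2×2 matrices: `f ↦ fromBlocks (diag f₀₀) (diag f₀₁) (diag f₁₀) (diag f₁₁)`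
is a ring homomorphism `(Fin r → M₂(ℂ)) →+* M_{2r}(ℂ)`. Under it `U` is the tuple of reflections
`R(c i)` and `E(φ, Π)` the constant tuple `diag(e^{iφ}, e^{-iφ})`. Since `U` is Hermitian, the
phased alternating sequence is the image of the tuple of QSP matrices `QSP(Φ, c i)`, whose top-left
block is therefore `diag (QSP(Φ, c i)₀₀) = diag (p (c i))`.
-/

section FromBlocksDiagonal

variable (ι R : Type*) [Fintype ι] [DecidableEq ι]

def fromBlocksDiagonalRingHom [Semiring R] :
    (ι → Matrix (Fin 2) (Fin 2) R) →+* Matrix (ι ⊕ ι) (ι ⊕ ι) R where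
  toFun f := fromBlocks
    (diagonal fun i => f i 0 0) (diagonal fun i => f i 0 1)
    (diagonal fun i => f i 1 0) (diagonal fun i => f i 1 1)
  map_one' := by
    simp only [Pi.one_apply, one_apply]
    simp [← fromBlocks_one]
  map_mul' f g := by
    rw [fromBlocks_multiply]
    simp only [diagonal_mul_diagonal, diagonal_add, Pi.mul_apply, mul_apply, Fin.sum_univ_two]
  map_zero' := by simp
  map_add' f g := by
    rw [fromBlocks_add]
    simp [← diagonal_add]

variable {ι R}

theorem fromBlocksDiagonalRingHom_apply [Semiring R] (f : ι → Matrix (Fin 2) (Fin 2) R) :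
    fromBlocksDiagonalRingHom ι R f = fromBlocks
      (diagonal fun i => f i 0 0) (diagonal fun i => f i 0 1)
      (diagonal fun i => f i 1 0) (diagonal fun i => f i 1 1) :=
  rfl

theorem toBlocks₁₁_fromBlocksDiagonalRingHom [Semiring R] (f : ι → Matrix (Fin 2) (Fin 2) R) :
    (fromBlocksDiagonalRingHom ι R f).toBlocks₁₁ = diagonal fun i => f i 0 0 :=
  toBlocks_fromBlocks₁₁ _ _ _ _

theorem conjTranspose_fromBlocksDiagonalRingHom [Semiring R] [StarRing R]
    (f : ι → Matrix (Fin 2) (Fin 2) R) :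
    (fromBlocksDiagonalRingHom ι R f)ᴴ = fromBlocksDiagonalRingHom ι R fun i => (f i)ᴴ := by
  simp [fromBlocksDiagonalRingHom_apply, fromBlocks_conjTranspose, diagonal_conjTranspose,
    Pi.star_def]

end FromBlocksDiagonal

theorem List.prod_map_range_two_mul {M : Type*} [Monoid M] (g : ℕ → M) (k : ℕ) :
    ((List.range (2 * k)).map g).prod =
      ((List.range k).map fun j => g (2 * j) * g (2 * j + 1)).prod := by
  induction k with
  | zero => simp
  | succ k ih =>
    rw [show 2 * (k + 1) = 2 * k + 1 + 1 by ring, List.range_succ, List.range_succ,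
      List.range_succ]
    simp [ih]

section PhasedProd

variable {M : Type*} [Monoid M]

/-- `e φ₀ · u · e φ₁ · u ⋯ u · e φₙ`: the common shape of `QSP` and, for Hermitian `u`, of
`phasedAltSeq`. -/
def phasedProd (u : M) (e : ℝ → M) (n : ℕ) (Φ : ℕ → ℝ) : M :=
  e (Φ 0) * ((List.range n).map fun j => u * e (Φ (j + 1))).prod

theorem map_phasedProd {N F : Type*} [Monoid N] [FunLike F M N] [MonoidHomClass F M N] (f : F)
    (u : M) (e : ℝ → M) (n : ℕ) (Φ : ℕ → ℝ) :
    f (phasedProd u e n Φ) = phasedProd (f u) (fun φ => f (e φ)) n Φ := by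
  simp [phasedProd, map_list_prod, List.map_map, Function.comp_def]

theorem phasedProd_two_mul (u : M) (e : ℝ → M) (k : ℕ) (Φ : ℕ → ℝ) :
    phasedProd u e (2 * k) Φ = e (Φ 0) *
      ((List.range k).map fun j => u * e (Φ (2 * j + 1)) * u * e (Φ (2 * j + 2))).prod := by
  simp [phasedProd, List.prod_map_range_two_mul, mul_assoc]

theorem phasedProd_two_mul_add_one (u : M) (e : ℝ → M) (k : ℕ) (Φ : ℕ → ℝ) :
    phasedProd u e (2 * k + 1) Φ = e (Φ 0) * u * e (Φ 1) *
      ((List.range k).map fun j => u * e (Φ (2 * j + 2)) * u * e (Φ (2 * j + 3))).prod := by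
  rw [phasedProd, List.range_succ_eq_map, List.map_cons, List.prod_cons, List.map_map]
  simp [Function.comp_def, List.prod_map_range_two_mul, mul_assoc]

end PhasedProd

theorem phasedProd_apply {ι : Type*} {M : ι → Type*} [∀ i, Monoid (M i)] (u : ∀ i, M i)
    (e : ℝ → ∀ i, M i) (n : ℕ) (Φ : ℕ → ℝ) (i : ι) :
    phasedProd u e n Φ i = phasedProd (u i) (fun φ => e φ i) n Φ :=
  map_phasedProd (Pi.evalMonoidHom M i) u e n Φ

theorem QSP_eq_phasedProd (n : ℕ) (Φ : ℕ → ℝ) (x : ℝ) :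
    QSP n Φ x = phasedProd (Rmat x) phaseMat n Φ :=
  rfl

theorem phasedAltSeq_eq_phasedProd {m : Type*} [Fintype m] [DecidableEq m]
    {U : Matrix m m ℂ} (hU : Uᴴ = U) (P : Matrix m m ℂ) (n : ℕ) (Φ : ℕ → ℝ) :
    phasedAltSeq U P P n Φ = phasedProd U (fun φ => Emat φ P) n Φ := by
  rw [phasedAltSeq, hU]
  split_ifs with hn
  · obtain ⟨k, rfl⟩ := hn
    rw [phasedProd_two_mul_add_one, show (2 * k + 1 - 1) / 2 = k by omega]
  · obtain ⟨k, rfl⟩ := Nat.not_odd_iff_even.mp hn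
    rw [← two_mul, phasedProd_two_mul, show 2 * k / 2 = k by omega]

theorem Rmat_conjTranspose (x : ℝ) : (Rmat x)ᴴ = Rmat x := by
  ext i j
  fin_cases i <;> fin_cases j <;> simp [Rmat]

theorem fromBlocks_diagonal_eq_fromBlocksDiagonalRingHom_Rmat {ι : Type*} [Fintype ι]
    [DecidableEq ι] (c : ι → ℝ) :
    fromBlocks (diagonal fun i => (c i : ℂ)) (diagonal fun i => (Real.sqrt (1 - c i ^ 2) : ℂ))
      (diagonal fun i => (Real.sqrt (1 - c i ^ 2) : ℂ)) (-diagonal fun i => (c i : ℂ)) =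
      fromBlocksDiagonalRingHom ι ℂ fun i => Rmat (c i) := by
  simp [fromBlocksDiagonalRingHom_apply, Rmat, diagonal_neg]

theorem Emat_fromBlocks_one_zero {ι : Type*} [Fintype ι] [DecidableEq ι] (φ : ℝ) :
    Emat φ (fromBlocks (1 : Matrix ι ι ℂ) 0 0 0) =
      fromBlocksDiagonalRingHom ι ℂ fun _ => phaseMat φ := by
  rw [fromBlocksDiagonalRingHom_apply]
  ext (i | i) (j | j) <;> simp [Emat, phaseMat, one_apply, diagonal_apply]

theorem qsvt_rotation_block_general (r : ℕ) (c : Fin r → ℝ)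
    (hc : ∀ i, 0 ≤ c i ∧ c i ≤ 1)
    (n : ℕ) (Φ : ℕ → ℝ) (p : Polynomial ℂ)
    (hqsp : ∀ x : ℝ, x ∈ Set.Icc (-1 : ℝ) 1 → (QSP n Φ x) 0 0 = p.eval (x : ℂ)) :
    (phasedAltSeq
        (Matrix.fromBlocks
          (Matrix.diagonal (fun i => (c i : ℂ)))
          (Matrix.diagonal (fun i => (Real.sqrt (1 - c i ^ 2) : ℂ)))
          (Matrix.diagonal (fun i => (Real.sqrt (1 - c i ^ 2) : ℂ)))
          (-(Matrix.diagonal (fun i => (c i : ℂ)))))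
        (Matrix.fromBlocks (1 : Matrix (Fin r) (Fin r) ℂ) 0 0 0)
        (Matrix.fromBlocks (1 : Matrix (Fin r) (Fin r) ℂ) 0 0 0)
        n Φ).toBlocks₁₁ =
      Matrix.diagonal (fun i => p.eval ((c i : ℂ))) := by
  have hU_herm : (fromBlocksDiagonalRingHom (Fin r) ℂ fun i => Rmat (c i))ᴴ =
      fromBlocksDiagonalRingHom (Fin r) ℂ fun i => Rmat (c i) := by
    simp only [conjTranspose_fromBlocksDiagonalRingHom, Rmat_conjTranspose]
  rw [fromBlocks_diagonal_eq_fromBlocksDiagonalRingHom_Rmat, phasedAltSeq_eq_phasedProd hU_herm]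
  simp only [Emat_fromBlocks_one_zero]
  rw [← map_phasedProd, toBlocks₁₁_fromBlocksDiagonalRingHom]
  congr 1
  ext i
  rw [phasedProd_apply, ← QSP_eq_phasedProd]
  exact hqsp (c i) ⟨by linarith [(hc i).1], (hc i).2⟩

/-- **QSVT on the CS-form unitary** (Lemma 2.10, middle case): the top-left
block of the phased alternating sequence applied to
`fromBlocks C S S (-C)` is `diag(p(c i))`. -/
theorem qsvt_rotation_block (r : ℕ) (hr : 1 ≤ r) (c : Fin r → ℝ)
    (hc : ∀ i, 0 ≤ c i ∧ c i ≤ 1)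
    (n : ℕ) (hn : 1 ≤ n) (Φ : ℕ → ℝ) (p : Polynomial ℂ) (hdeg : p.degree ≤ n)
    (hqsp : ∀ x : ℝ, x ∈ Set.Icc (-1 : ℝ) 1 → (QSP n Φ x) 0 0 = p.eval (x : ℂ)) :
    (phasedAltSeq
        (Matrix.fromBlocks
          (Matrix.diagonal (fun i => (c i : ℂ)))
          (Matrix.diagonal (fun i => (Real.sqrt (1 - c i ^ 2) : ℂ)))
          (Matrix.diagonal (fun i => (Real.sqrt (1 - c i ^ 2) : ℂ)))
          (-(Matrix.diagonal (fun i => (c i : ℂ)))))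
        (Matrix.fromBlocks (1 : Matrix (Fin r) (Fin r) ℂ) 0 0 0)
        (Matrix.fromBlocks (1 : Matrix (Fin r) (Fin r) ℂ) 0 0 0)
        n Φ).toBlocks₁₁ =
      Matrix.diagonal (fun i => p.eval ((c i : ℂ))) :=
  qsvt_rotation_block_general r c hc n Φ p hqsp
end

section
/- Let U be a d×d unitary matrix over ℂ, let B_L be a d×r and B_R a d×c complex matrix with orthonormal columns (B_Lᴴ B_L = I_r and B_Rᴴ B_R = I_c), and set Π_L = B_L B_Lᴴ, Π_R = B_R B_Rᴴ, and M = Π_L U Π_R. Let n be odd, Φ = (φ_0, …, φ_n) ∈ ℝ^{n+1}, and let p ∈ ℂ[X] be an odd polynomial with deg p ≤ n, writing p(X) = X·g(X²) for some g ∈ ℂ[X], such that for all x ∈ [−1, 1] the (0,0) entry of QSP(Φ, x) equals p(x). Then Π_L · U_Φ · Π_R = M · g(Mᴴ M), where g is applied to the d×d matrix Mᴴ M via polynomial evaluation. -/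
open Matrix Complex Polynomial

/-- The phased alternating sequence `U_Φ` for odd `n`:
`E(φ₀, Π_L)·U·E(φ₁, Π_R)·∏_{j=1}^{(n-1)/2} [Uᴴ·E(φ_{2j}, Π_L)·U·E(φ_{2j+1}, Π_R)]`. -/
noncomputable def phasedAltSeqOdd {m : Type*} [Fintype m] [DecidableEq m]
    (U PL PR : Matrix m m ℂ) (n : ℕ) (Φ : ℕ → ℝ) : Matrix m m ℂ :=
  Emat (Φ 0) PL * U * Emat (Φ 1) PR *
    ((List.range ((n - 1) / 2)).map
      (fun j => Uᴴ * Emat (Φ (2 * j + 2)) PL * U * Emat (Φ (2 * j + 3)) PR)).prod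

/-!
Write `A = Π_L U`, `V = Uᴴ Π_L U`, `Q = Π_R` and `W = Q V Q`, which is `Mᴴ M`. Right multiplication
by `E(φ, Π_R)` and by `Uᴴ E(φ, Π_L) U = E(φ, V)` maps the elements `α • A + A b(W) Q + A c(W) Q V`
(`b, c` polynomials) to elements of the same shape, and the new coefficients `(α, b, c)` depend
only on `φ`. Hence `Π_L U_Φ Π_R = M q(Mᴴ M)` for one polynomial `q` determined by `Φ` alone,
whatever `U`, `Π_L`, `Π_R` are. Specialising to `U = R(x)` and `Π_L = Π_R = |0⟩⟨0|` gives
`QSP(Φ, x)₀₀ = x q(x²)`, so `X q(X²) = p = X g(X²)` and therefore `q = g`.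
-/

theorem LinearMap.map_phase {k R M : Type*} [CommRing k] [Ring R] [Algebra k R]
    [AddCommGroup M] [Module k M] (f : M →ₗ[k] R) {σ : M → M} {P : R}
    (hσ : ∀ s, f (σ s) = f s * P) (a z : k) (s : M) :
    f (a • σ s + z • (s - σ s)) = f s * (a • P + z • (1 - P)) := by
  simp only [map_add, map_smul, map_sub, hσ, mul_add, mul_smul_comm, mul_sub, mul_one]

theorem Commute.aeval_left {k R : Type*} [CommSemiring k] [Semiring R] [Algebra k R] {a b : R}
    (h : Commute a b) (q : k[X]) : Commute (aeval a q) b :=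
  aeval_eq_smeval a q ▸ smeval_commute_left k q h

theorem IsIdempotentElem.mul_aeval_smul {k R : Type*} [CommSemiring k] [Semiring R]
    [Algebra k R] {E : R} (hE : IsIdempotentElem E) (s : k) (q : k[X]) :
    E * aeval (s • E) q = q.eval s • E := by
  induction q using Polynomial.induction_on with
  | C a => rw [aeval_C, Algebra.algebraMap_eq_smul_one, mul_smul_comm, mul_one, eval_C]
  | add p q hp hq => rw [map_add, mul_add, hp, hq, eval_add, add_smul]
  | monomial n a ih =>
    rw [pow_succ, ← mul_assoc, map_mul, aeval_X, ← mul_assoc, ih, smul_mul_smul_comm, hE.eq,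
      eval_mul_X]

theorem Matrix.isStarProjection_mul_conjTranspose_self {α m n : Type*} [CommSemiring α]
    [StarRing α] [Fintype m] [Fintype n] [DecidableEq n] {B : Matrix m n α} (hB : Bᴴ * B = 1) : IsStarProjection (B * Bᴴ) where
  isIdempotentElem := by
    rw [IsIdempotentElem, Matrix.mul_assoc, ← Matrix.mul_assoc Bᴴ, hB, Matrix.one_mul]
  isSelfAdjoint := by
    rw [IsSelfAdjoint, star_eq_conjTranspose, conjTranspose_mul, conjTranspose_conjTranspose]

namespace QSVT

section Coefficients

variable {R : Type*} [Ring R] [Algebra ℂ R] (A V Q : R)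

noncomputable def coeffsEval : ℂ × ℂ[X] × ℂ[X] →ₗ[ℂ] R where
  toFun s := s.1 • A + A * aeval (Q * V * Q) s.2.1 * Q + A * aeval (Q * V * Q) s.2.2 * (Q * V)
  map_add' s t := by
    simp only [Prod.fst_add, Prod.snd_add, map_add, add_smul, mul_add, add_mul]
    abel
  map_smul' a s := by
    simp only [Prod.smul_fst, Prod.smul_snd, map_smul, smul_add, mul_smul_comm, smul_mul_assoc,
      smul_eq_mul, mul_smul, RingHom.id_apply]

noncomputable def mulRightV (s : ℂ × ℂ[X] × ℂ[X]) : ℂ × ℂ[X] × ℂ[X] :=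
  (s.1, 0, s.2.1 + s.2.2)

noncomputable def sandwichPoly (s : ℂ × ℂ[X] × ℂ[X]) : ℂ[X] :=
  C s.1 + s.2.1 + X * s.2.2

noncomputable def mulRightQ (s : ℂ × ℂ[X] × ℂ[X]) : ℂ × ℂ[X] × ℂ[X] :=
  (0, sandwichPoly s, 0)

noncomputable def mulRightEmat (φ : ℝ) (σ : ℂ × ℂ[X] × ℂ[X] → ℂ × ℂ[X] × ℂ[X])
    (s : ℂ × ℂ[X] × ℂ[X]) : ℂ × ℂ[X] × ℂ[X] :=
  exp (φ * I) • σ s + exp (-(φ * I)) • (s - σ s)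

variable {A V Q}

theorem coeffsEval_mulRightV (hAV : A * V = A) (hV : IsIdempotentElem V)
    (s : ℂ × ℂ[X] × ℂ[X]) : coeffsEval A V Q (mulRightV s) = coeffsEval A V Q s * V := by
  simp only [coeffsEval, mulRightV, LinearMap.coe_mk, AddHom.coe_mk, map_zero, mul_zero,
    zero_mul, zero_add, map_add, mul_add, add_mul, smul_mul_assoc, hAV, mul_assoc, hV.eq,
    add_assoc]

theorem coeffsEval_zero_poly_zero (q : ℂ[X]) :
    coeffsEval A V Q (0, q, 0) = A * aeval (Q * V * Q) q * Q := by
  simp [coeffsEval]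

theorem coeffsEval_mulRightQ (hQ : IsIdempotentElem Q) (s : ℂ × ℂ[X] × ℂ[X]) :
    coeffsEval A V Q (mulRightQ s) = coeffsEval A V Q s * Q := by
  have hWQ : Q * V * Q * Q = Q * V * Q := by rw [mul_assoc, hQ.eq]
  have hX : aeval (Q * V * Q) (X * s.2.2) * Q = aeval (Q * V * Q) s.2.2 * (Q * V * Q) := by
    rw [map_mul, aeval_X, ← ((Commute.refl _).aeval_left s.2.2).eq, mul_assoc, hWQ]
  rw [mulRightQ, coeffsEval_zero_poly_zero, sandwichPoly, map_add, map_add, aeval_C,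
    Algebra.algebraMap_eq_smul_one, mul_add, add_mul, mul_assoc A (aeval _ (X * _)) Q, hX]
  simp only [coeffsEval, LinearMap.coe_mk, AddHom.coe_mk, mul_add, add_mul, mul_assoc, hQ.eq,
    smul_mul_assoc, mul_smul_comm, mul_one]

end Coefficients

noncomputable def qsvtCoeffs (Φ : ℕ → ℝ) : ℕ → ℂ × ℂ[X] × ℂ[X]
  | 0 => mulRightEmat (Φ 1) mulRightQ (exp (Φ 0 * I), 0, 0)
  | k + 1 =>
    mulRightEmat (Φ (2 * k + 3)) mulRightQ (mulRightEmat (Φ (2 * k + 2)) mulRightV (qsvtCoeffs Φ k))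

noncomputable def qsvtPoly (Φ : ℕ → ℝ) (K : ℕ) : ℂ[X] :=
  sandwichPoly (qsvtCoeffs Φ K)

section PhasedSequence

variable {m : Type*} [Fintype m] [DecidableEq m] {U P Q : Matrix m m ℂ}

theorem coeffsEval_mulRightEmat {A V : Matrix m m ℂ} {σ : ℂ × ℂ[X] × ℂ[X] → ℂ × ℂ[X] × ℂ[X]}
    (hσ : ∀ s, coeffsEval A V Q (σ s) = coeffsEval A V Q s * P) (φ : ℝ) (s : ℂ × ℂ[X] × ℂ[X]) :
    coeffsEval A V Q (mulRightEmat φ σ s) = coeffsEval A V Q s * Emat φ P :=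
  (coeffsEval A V Q).map_phase hσ _ _ s

theorem mul_Emat_self (hP : IsIdempotentElem P) (φ : ℝ) : P * Emat φ P = exp (φ * I) • P := by
  rw [Emat, mul_add, mul_smul_comm, mul_smul_comm, mul_sub, mul_one, hP.eq, sub_self, smul_zero,
    add_zero]

theorem conjTranspose_mul_Emat_mul (hU : Uᴴ * U = 1) (φ : ℝ) :
    Uᴴ * Emat φ P * U = Emat φ (Uᴴ * P * U) := by
  simp only [Emat, mul_add, add_mul, mul_smul_comm, smul_mul_assoc, mul_sub, sub_mul, mul_one, hU]

theorem phasedAltSeqOdd_one (Φ : ℕ → ℝ) :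
    phasedAltSeqOdd U P Q 1 Φ = Emat (Φ 0) P * U * Emat (Φ 1) Q := by
  simp [phasedAltSeqOdd]

theorem phasedAltSeqOdd_succ (Φ : ℕ → ℝ) (K : ℕ) :
    phasedAltSeqOdd U P Q (2 * (K + 1) + 1) Φ = phasedAltSeqOdd U P Q (2 * K + 1) Φ *
      (Uᴴ * Emat (Φ (2 * K + 2)) P * U * Emat (Φ (2 * K + 3)) Q) := by
  rw [phasedAltSeqOdd, phasedAltSeqOdd, show (2 * (K + 1) + 1 - 1) / 2 = K + 1 by omega,
    show (2 * K + 1 - 1) / 2 = K by omega, List.range_succ, List.map_append, List.prod_append,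
    List.map_singleton, List.prod_singleton, mul_assoc _ _ (Uᴴ * _ * _ * _)]

theorem mul_phasedAltSeqOdd (hP : IsIdempotentElem P) (hQ : IsIdempotentElem Q)
    (hU : U ∈ unitary (Matrix m m ℂ)) (Φ : ℕ → ℝ) (K : ℕ) :
    P * phasedAltSeqOdd U P Q (2 * K + 1) Φ =
      coeffsEval (P * U) (Uᴴ * P * U) Q (qsvtCoeffs Φ K) := by
  have hUU : U * Uᴴ = 1 := Unitary.mul_star_self_of_mem hU
  have hAV : P * U * (Uᴴ * P * U) = P * U := by
    rw [show P * U * (Uᴴ * P * U) = P * (U * Uᴴ) * P * U by simp only [mul_assoc], hUU, mul_one,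
      hP.eq]
  have hV : IsIdempotentElem (Uᴴ * P * U) := by
    rw [IsIdempotentElem, show Uᴴ * P * U * (Uᴴ * P * U) = Uᴴ * P * (U * Uᴴ) * P * U by
      simp only [mul_assoc], hUU, mul_one, mul_assoc Uᴴ P P, hP.eq]
  have hσV := coeffsEval_mulRightV (Q := Q) hAV hV
  have hσQ := coeffsEval_mulRightQ (A := P * U) (V := Uᴴ * P * U) hQ
  induction K with
  | zero =>
    rw [phasedAltSeqOdd_one, qsvtCoeffs, coeffsEval_mulRightEmat hσQ, ← mul_assoc, ← mul_assoc,
      mul_Emat_self hP]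
    simp [coeffsEval]
  | succ K ih =>
    rw [phasedAltSeqOdd_succ, qsvtCoeffs, coeffsEval_mulRightEmat hσQ,
      coeffsEval_mulRightEmat hσV, ← ih,
      conjTranspose_mul_Emat_mul (Unitary.star_mul_self_of_mem hU)]
    simp only [mul_assoc]

theorem mul_phasedAltSeqOdd_mul (hP : IsStarProjection P) (hQ : IsStarProjection Q)
    (hU : U ∈ unitary (Matrix m m ℂ)) (Φ : ℕ → ℝ) (K : ℕ) :
    P * phasedAltSeqOdd U P Q (2 * K + 1) Φ * Q =
      (P * U * Q) * aeval ((P * U * Q)ᴴ * (P * U * Q)) (qsvtPoly Φ K) := by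
  have hW : (P * U * Q)ᴴ * (P * U * Q) = Q * (Uᴴ * P * U) * Q := by
    have hPH : Pᴴ = P := hP.isSelfAdjoint
    have hQH : Qᴴ = Q := hQ.isSelfAdjoint
    simp only [conjTranspose_mul, hPH, hQH, mul_assoc]
    rw [← mul_assoc P P, hP.isIdempotentElem.eq]
  have hQW : Commute (Q * (Uᴴ * P * U) * Q) Q := by
    simp only [Commute, SemiconjBy, mul_assoc, hQ.isIdempotentElem.eq]
    rw [← mul_assoc Q Q, hQ.isIdempotentElem.eq]
  rw [mul_phasedAltSeqOdd hP.isIdempotentElem hQ.isIdempotentElem hU,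
    ← coeffsEval_mulRightQ hQ.isIdempotentElem, mulRightQ, coeffsEval_zero_poly_zero, hW,
    qsvtPoly, mul_assoc (P * U), (hQW.aeval_left _).eq, ← mul_assoc (P * U) Q]

end PhasedSequence

theorem Rmat_conjTranspose (x : ℝ) : (Rmat x)ᴴ = Rmat x := by
  ext i j; fin_cases i <;> fin_cases j <;> simp [Rmat]

theorem Rmat_mul_self {x : ℝ} (hx : x ∈ Set.Icc (-1 : ℝ) 1) : Rmat x * Rmat x = 1 := by
  have hs : (Real.sqrt (1 - x ^ 2) : ℂ) * Real.sqrt (1 - x ^ 2) = 1 - (x : ℂ) * x := by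
    rw [← ofReal_mul, Real.mul_self_sqrt (by nlinarith [hx.1, hx.2])]
    push_cast; ring
  ext i j; fin_cases i <;> fin_cases j <;> simp [Rmat, mul_apply, Fin.sum_univ_two, hs] <;> ring

theorem Rmat_mem_unitary {x : ℝ} (hx : x ∈ Set.Icc (-1 : ℝ) 1) :
    Rmat x ∈ unitary (Matrix (Fin 2) (Fin 2) ℂ) := by
  rw [Unitary.mem_iff, star_eq_conjTranspose, Rmat_conjTranspose, Rmat_mul_self hx, and_self]

theorem isStarProjection_single_zero_zero :
    IsStarProjection (single (0 : Fin 2) (0 : Fin 2) (1 : ℂ)) where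
  isIdempotentElem := by rw [IsIdempotentElem, single_mul_single_same, mul_one]
  isSelfAdjoint := by rw [IsSelfAdjoint, star_eq_conjTranspose, conjTranspose_single, star_one]

theorem Emat_single_zero_zero (φ : ℝ) : Emat φ (single 0 0 1) = phaseMat φ := by
  ext i j; fin_cases i <;> fin_cases j <;> simp [Emat, phaseMat, one_apply]

theorem QSP_succ (n : ℕ) (Φ : ℕ → ℝ) (x : ℝ) :
    QSP (n + 1) Φ x = QSP n Φ x * (Rmat x * phaseMat (Φ (n + 1))) := by
  rw [QSP, QSP, List.range_succ, List.map_append, List.prod_append, List.map_singleton,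
    List.prod_singleton, mul_assoc]

theorem QSP_eq_phasedAltSeqOdd (Φ : ℕ → ℝ) (x : ℝ) (K : ℕ) :
    QSP (2 * K + 1) Φ x =
      phasedAltSeqOdd (Rmat x) (single 0 0 1) (single 0 0 1) (2 * K + 1) Φ := by
  induction K with
  | zero => simp [QSP, phasedAltSeqOdd_one, Emat_single_zero_zero, mul_assoc]
  | succ K ih =>
    rw [phasedAltSeqOdd_succ, ← ih, show 2 * (K + 1) + 1 = 2 * K + 1 + 1 + 1 by ring, QSP_succ,
      QSP_succ, Rmat_conjTranspose, Emat_single_zero_zero, Emat_single_zero_zero]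
    simp only [mul_assoc]

theorem QSP_apply_zero_zero (Φ : ℕ → ℝ) (K : ℕ) {x : ℝ} (hx : x ∈ Set.Icc (-1 : ℝ) 1) :
    QSP (2 * K + 1) Φ x 0 0 = x * (qsvtPoly Φ K).eval ((x : ℂ) ^ 2) := by
  set e := single (0 : Fin 2) (0 : Fin 2) (1 : ℂ)
  have he := isStarProjection_single_zero_zero
  have hM : e * Rmat x * e = (x : ℂ) • e := by
    rw [single_mul_mul_single, smul_single]; simp [Rmat]
  have hMM : ((x : ℂ) • e)ᴴ * ((x : ℂ) • e) = ((x : ℂ) ^ 2) • e := by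
    rw [conjTranspose_smul, show eᴴ = e from he.isSelfAdjoint, smul_mul_smul_comm,
      he.isIdempotentElem.eq, Complex.star_def, conj_ofReal, sq]
  have key := mul_phasedAltSeqOdd_mul he he (Rmat_mem_unitary hx) Φ K
  rw [← QSP_eq_phasedAltSeqOdd, hM, hMM, smul_mul_assoc, he.isIdempotentElem.mul_aeval_smul,
    smul_smul, single_mul_mul_single, smul_single] at key
  simpa using congrFun (congrFun key 0) 0

theorem qsvtPoly_eq_of_QSP {Φ : ℕ → ℝ} {K : ℕ} {p g : ℂ[X]} (hpg : p = X * g.comp (X ^ 2))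
    (hqsp : ∀ x : ℝ, x ∈ Set.Icc (-1 : ℝ) 1 → QSP (2 * K + 1) Φ x 0 0 = p.eval (x : ℂ)) :
    qsvtPoly Φ K = g := by
  have hp : p = X * (qsvtPoly Φ K).comp (X ^ 2) := by
    refine eq_of_infinite_eval_eq _ _ (Set.Infinite.mono ?_
      ((Set.Icc_infinite (by norm_num : (-1 : ℝ) < 1)).image ofReal_injective.injOn))
    rintro _ ⟨x, hx, rfl⟩
    simp [← hqsp x hx, QSP_apply_zero_zero Φ K hx]
  rw [hpg] at hp
  refine expand_injective two_pos ?_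
  simp only [expand_eq_comp_X_pow]
  exact (mul_left_cancel₀ X_ne_zero hp).symm

end QSVT

theorem qsvt_odd_general (d r c : ℕ) (U : Matrix (Fin d) (Fin d) ℂ)
    (hU1 : Uᴴ * U = 1) (hU2 : U * Uᴴ = 1)
    (BL : Matrix (Fin d) (Fin r) ℂ) (BR : Matrix (Fin d) (Fin c) ℂ)
    (hBL : BLᴴ * BL = 1) (hBR : BRᴴ * BR = 1)
    (n : ℕ) (hn : Odd n) (Φ : ℕ → ℝ)
    (p g : Polynomial ℂ)
    (hpg : p = Polynomial.X * g.comp (Polynomial.X ^ 2))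
    (hqsp : ∀ x : ℝ, x ∈ Set.Icc (-1 : ℝ) 1 → (QSP n Φ x) 0 0 = p.eval (x : ℂ)) :
    (BL * BLᴴ) * phasedAltSeqOdd U (BL * BLᴴ) (BR * BRᴴ) n Φ * (BR * BRᴴ) =
      ((BL * BLᴴ) * U * (BR * BRᴴ)) *
        Polynomial.aeval
          (((BL * BLᴴ) * U * (BR * BRᴴ))ᴴ * ((BL * BLᴴ) * U * (BR * BRᴴ))) g := by
  obtain ⟨K, rfl⟩ := hn
  rw [QSVT.mul_phasedAltSeqOdd_mul (isStarProjection_mul_conjTranspose_self hBL)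
    (isStarProjection_mul_conjTranspose_self hBR) ⟨hU1, hU2⟩, QSVT.qsvtPoly_eq_of_QSP hpg hqsp]

/-- **QSVT, odd case** (Theorem 2.9): for an odd QSP-achievable polynomial
`p(X) = X·g(X²)`, the phased alternating sequence block-encodes
`p⁽ˢᵛ⁾(M) = M·g(Mᴴ M)` where `M = Π_L U Π_R`. -/
theorem qsvt_odd (d r c : ℕ) (U : Matrix (Fin d) (Fin d) ℂ)
    (hU1 : Uᴴ * U = 1) (hU2 : U * Uᴴ = 1)
    (BL : Matrix (Fin d) (Fin r) ℂ) (BR : Matrix (Fin d) (Fin c) ℂ)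
    (hBL : BLᴴ * BL = 1) (hBR : BRᴴ * BR = 1)
    (n : ℕ) (hn : Odd n) (Φ : ℕ → ℝ)
    (p g : Polynomial ℂ) (hdeg : p.degree ≤ n)
    (hpg : p = Polynomial.X * g.comp (Polynomial.X ^ 2))
    (hqsp : ∀ x : ℝ, x ∈ Set.Icc (-1 : ℝ) 1 → (QSP n Φ x) 0 0 = p.eval (x : ℂ)) :
    (BL * BLᴴ) * phasedAltSeqOdd U (BL * BLᴴ) (BR * BRᴴ) n Φ * (BR * BRᴴ) =
      ((BL * BLᴴ) * U * (BR * BRᴴ)) *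
        Polynomial.aeval
          (((BL * BLᴴ) * U * (BR * BRᴴ))ᴴ * ((BL * BLᴴ) * U * (BR * BRᴴ))) g :=
  qsvt_odd_general d r c U hU1 hU2 BL BR hBL hBR n hn Φ p g hpg hqsp
end

section
/- Let U be a d×d unitary matrix over ℂ, let B_L be a d×r and B_R a d×c complex matrix with orthonormal columns (B_Lᴴ B_L = I_r and B_Rᴴ B_R = I_c), and set Π_L = B_L B_Lᴴ, Π_R = B_R B_Rᴴ, and M = Π_L U Π_R. Let n ≥ 2 be even, Φ = (φ_0, …, φ_n) ∈ ℝ^{n+1}, and let p ∈ ℂ[X] be an even polynomial with deg p ≤ n, writing p(X) = g(X²) for some g ∈ ℂ[X], such that for all x ∈ [−1, 1] the (0,0) entry of QSP(Φ, x) equals p(x). Then Π_R · U_Φ · Π_R = Π_R · g(Mᴴ M) · Π_R, where g is applied to the d×d matrix Mᴴ M via polynomial evaluation. -/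
open Matrix Complex Polynomial

/-- The phased alternating sequence `U_Φ` for even `n`:
`E(φ₀, Π_R)·∏_{j=1}^{n/2} [Uᴴ·E(φ_{2j-1}, Π_L)·U·E(φ_{2j}, Π_R)]`. -/
noncomputable def phasedAltSeqEven {m : Type*} [Fintype m] [DecidableEq m]
    (U PL PR : Matrix m m ℂ) (n : ℕ) (Φ : ℕ → ℝ) : Matrix m m ℂ :=
  Emat (Φ 0) PR *
    ((List.range (n / 2)).map
      (fun j => Uᴴ * Emat (Φ (2 * j + 1)) PL * U * Emat (Φ (2 * j + 2)) PR)).prod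

theorem Commute.aeval_right {R A : Type*} [CommSemiring R] [Semiring A] [Algebra R A]
    {a b : A} (h : Commute a b) (f : R[X]) : Commute a (aeval b f) := by
  induction f using Polynomial.induction_on' with
  | add f g hf hg => simpa using hf.add_right hg
  | monomial n r =>
    simpa [aeval_monomial] using
      (Algebra.commute_algebraMap_right r a).mul_right (h.pow_right n)

theorem Matrix.aeval_diagonal {n R : Type*} [Fintype n] [DecidableEq n] [CommSemiring R]
    (v : n → R) (f : R[X]) : aeval (diagonal v) f = diagonal fun i => f.eval (v i) := by
  simpa [aeval_pi_apply] using aeval_algHom_apply (diagonalAlgHom R) v f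

theorem IsIdempotentElem.mul_mul_of_mul_eq_one {M : Type*} [Monoid M] {p v w : M}
    (hp : IsIdempotentElem p) (hwv : w * v = 1) : IsIdempotentElem (v * p * w) := by
  rw [IsIdempotentElem, show v * p * w * (v * p * w) = v * (p * (w * v) * p) * w by
    simp only [mul_assoc], hwv, mul_one, hp.eq]

theorem star_mul_self_of_isStarProjection {R : Type*} [Semigroup R] [StarMul R] {l u r : R}
    (hl : IsStarProjection l) (hr : IsSelfAdjoint r) :
    star (l * u * r) * (l * u * r) = r * (star u * l * u) * r := by
  simp only [star_mul, hl.isSelfAdjoint.star_eq, hr.star_eq, mul_assoc]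
  rw [← mul_assoc l l, hl.isIdempotentElem.eq]

theorem Matrix.isStarProjection_mul_conjTranspose {m n α : Type*} [Fintype m] [Fintype n]
    [DecidableEq n] [Semiring α] [StarRing α] {B : Matrix m n α} (hB : Bᴴ * B = 1) :
    IsStarProjection (B * Bᴴ) where
  isIdempotentElem := by
    rw [IsIdempotentElem, Matrix.mul_assoc, ← Matrix.mul_assoc Bᴴ, hB, Matrix.one_mul]
  isSelfAdjoint := (isHermitian_mul_conjTranspose_self B).isSelfAdjoint

theorem IsIdempotentElem.commute_mul_mul_self {M : Type*} [Semigroup M] {x : M}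
    (hx : IsIdempotentElem x) (y : M) : Commute x (x * y * x) := by
  rw [Commute, SemiconjBy, hx.mul_mul_self, ← mul_assoc, ← mul_assoc, hx.eq]

noncomputable def stepInner (φ : ℝ) (q : ℂ[X] × ℂ[X]) : ℂ[X] × ℂ[X] :=
  (C (exp (-(φ * I))) * q.1,
    C (exp (φ * I) - exp (-(φ * I))) * q.1 + C (exp (φ * I)) * q.2)

noncomputable def stepOuter (φ : ℝ) (q : ℂ[X] × ℂ[X]) : ℂ[X] × ℂ[X] :=
  (C (exp (φ * I)) * q.1 + C (exp (φ * I) - exp (-(φ * I))) * X * q.2,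
    C (exp (-(φ * I))) * q.2)

noncomputable def qsvtCoeffs (Φ : ℕ → ℝ) : ℕ → ℂ[X] × ℂ[X]
  | 0 => stepOuter (Φ 0) (1, 0)
  | k + 1 => stepOuter (Φ (2 * k + 2)) (stepInner (Φ (2 * k + 1)) (qsvtCoeffs Φ k))

noncomputable def qsvtPoly (Φ : ℕ → ℝ) (k : ℕ) : ℂ[X] :=
  (qsvtCoeffs Φ k).1 + X * (qsvtCoeffs Φ k).2

section TwoProjections

variable {D : Type*} [Fintype D] [DecidableEq D]

theorem Emat_eq_smul_one_add_smul (φ : ℝ) (P : Matrix D D ℂ) :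
    Emat φ P = exp (-(φ * I)) • 1 + (exp (φ * I) - exp (-(φ * I))) • P := by
  unfold Emat; module

theorem mul_Emat_mul {V W : Matrix D D ℂ} (hVW : V * W = 1) (φ : ℝ) (P : Matrix D D ℂ) :
    V * Emat φ P * W = Emat φ (V * P * W) := by
  simp only [Emat, mul_add, add_mul, mul_smul_comm, smul_mul_assoc, mul_sub, sub_mul, mul_one,
    hVW]

noncomputable def altPhaseProd (P Q : Matrix D D ℂ) (Φ : ℕ → ℝ) (k : ℕ) : Matrix D D ℂ :=
  Emat (Φ 0) P *
    ((List.range k).map fun j => Emat (Φ (2 * j + 1)) Q * Emat (Φ (2 * j + 2)) P).prod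

theorem altPhaseProd_zero (P Q : Matrix D D ℂ) (Φ : ℕ → ℝ) :
    altPhaseProd P Q Φ 0 = Emat (Φ 0) P := by
  simp [altPhaseProd]

theorem altPhaseProd_succ (P Q : Matrix D D ℂ) (Φ : ℕ → ℝ) (k : ℕ) :
    altPhaseProd P Q Φ (k + 1) =
      altPhaseProd P Q Φ k * Emat (Φ (2 * k + 1)) Q * Emat (Φ (2 * k + 2)) P := by
  simp [altPhaseProd, List.range_succ, mul_assoc]

theorem phasedAltSeqEven_two_mul {U : Matrix D D ℂ} (hU : Uᴴ * U = 1)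
    (PL PR : Matrix D D ℂ) (Φ : ℕ → ℝ) (k : ℕ) :
    phasedAltSeqEven U PL PR (2 * k) Φ = altPhaseProd PR (Uᴴ * PL * U) Φ k := by
  simp only [phasedAltSeqEven, altPhaseProd, Nat.mul_div_cancel_left k two_pos,
    ← mul_Emat_mul hU]

noncomputable def twoProjForm (P Q : Matrix D D ℂ) (q : ℂ[X] × ℂ[X]) : Matrix D D ℂ :=
  aeval (P * Q * P) q.1 * P + aeval (P * Q * P) q.2 * (P * Q)

variable {P Q : Matrix D D ℂ}

theorem twoProjForm_one_zero : twoProjForm P Q (1, 0) = P := by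
  simp [twoProjForm]

theorem twoProjForm_mul_Emat_inner (hQ : IsIdempotentElem Q) (φ : ℝ) (q : ℂ[X] × ℂ[X]) :
    twoProjForm P Q q * Emat φ Q = twoProjForm P Q (stepInner φ q) := by
  simp only [twoProjForm, stepInner, Emat_eq_smul_one_add_smul, map_add, map_mul, aeval_C,
    Algebra.algebraMap_eq_smul_one, mul_add, add_mul, mul_smul_comm, smul_mul_assoc, mul_one,
    one_mul, mul_assoc, hQ.eq]
  module

theorem twoProjForm_mul_Emat_outer (hP : IsIdempotentElem P) (φ : ℝ) (q : ℂ[X] × ℂ[X]) :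
    twoProjForm P Q q * Emat φ P = twoProjForm P Q (stepOuter φ q) := by
  simp only [twoProjForm, stepOuter, Emat_eq_smul_one_add_smul, map_add, map_mul, aeval_C,
    aeval_X, Algebra.algebraMap_eq_smul_one, mul_add, add_mul, mul_smul_comm, smul_mul_assoc,
    mul_one, one_mul]
  -- `b(A) P Q P = A b(A) P` because `A = P Q P` commutes with `b(A)` and `A P = A`
  have hβ : P * Q * P * aeval (P * Q * P) q.2 * P = aeval (P * Q * P) q.2 * (P * Q) * P := by
    rw [((Commute.refl _).aeval_right q.2).eq, mul_assoc, hP.mul_mul_self,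
      mul_assoc (aeval _ _) (P * Q) P]
  rw [hβ, hP.mul_mul_self]
  module

theorem mul_altPhaseProd (hP : IsIdempotentElem P) (hQ : IsIdempotentElem Q) (Φ : ℕ → ℝ)
    (k : ℕ) : P * altPhaseProd P Q Φ k = twoProjForm P Q (qsvtCoeffs Φ k) := by
  induction k with
  | zero =>
    rw [altPhaseProd_zero, qsvtCoeffs, ← twoProjForm_mul_Emat_outer hP, twoProjForm_one_zero]
  | succ k ih =>
    rw [altPhaseProd_succ, ← mul_assoc, ← mul_assoc, ih, twoProjForm_mul_Emat_inner hQ,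
      twoProjForm_mul_Emat_outer hP, qsvtCoeffs]

theorem twoProjForm_mul_self (hP : IsIdempotentElem P) (q : ℂ[X] × ℂ[X]) :
    twoProjForm P Q q * P = aeval (P * Q * P) (q.1 + X * q.2) * P := by
  rw [twoProjForm]
  set A := P * Q * P with hA
  rw [map_add, map_mul, aeval_X, add_mul, add_mul, hP.mul_mul_self, mul_assoc _ (P * Q) P,
    ← hA, ((Commute.refl A).aeval_right q.2).eq, mul_assoc _ A P, hP.mul_mul_self]

theorem mul_altPhaseProd_mul (hP : IsIdempotentElem P) (hQ : IsIdempotentElem Q) (Φ : ℕ → ℝ)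
    (k : ℕ) : P * altPhaseProd P Q Φ k * P = P * aeval (P * Q * P) (qsvtPoly Φ k) * P := by
  rw [mul_altPhaseProd hP hQ, twoProjForm_mul_self hP,
    ((hP.commute_mul_mul_self Q).aeval_right _).eq, hP.mul_mul_self, qsvtPoly]

end TwoProjections

noncomputable def proj₀ : Matrix (Fin 2) (Fin 2) ℂ := diagonal ![1, 0]

theorem isIdempotentElem_proj₀ : IsIdempotentElem proj₀ := by
  rw [IsIdempotentElem, proj₀, diagonal_mul_diagonal]
  congr 1; ext i; fin_cases i <;> simp

theorem phaseMat_eq_Emat (φ : ℝ) : phaseMat φ = Emat φ proj₀ := by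
  ext i j; fin_cases i <;> fin_cases j <;> simp [phaseMat, Emat, proj₀]

theorem Rmat_mul_self {x : ℝ} (hx : x ∈ Set.Icc (-1 : ℝ) 1) : Rmat x * Rmat x = 1 := by
  have hs : ((√(1 - x ^ 2) : ℝ) : ℂ) ^ 2 = 1 - (x : ℂ) ^ 2 := by
    rw [← ofReal_pow, Real.sq_sqrt (by nlinarith [hx.1, hx.2])]; push_cast; ring
  rw [Rmat, mul_fin_two, one_fin_two]
  ext i j; fin_cases i <;> fin_cases j <;> simp <;> first | linear_combination hs | ring

theorem proj₀_mul_Rmat_conj_mul_proj₀ (x : ℝ) :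
    proj₀ * (Rmat x * proj₀ * Rmat x) * proj₀ = diagonal ![(x : ℂ) ^ 2, 0] := by
  simp only [proj₀, diagonal_fin_two, Rmat, mul_fin_two]
  ext i j; fin_cases i <;> fin_cases j <;> simp [sq]

theorem QSP_two_mul {x : ℝ} (hx : x ∈ Set.Icc (-1 : ℝ) 1) (Φ : ℕ → ℝ) (k : ℕ) :
    QSP (2 * k) Φ x = altPhaseProd proj₀ (Rmat x * proj₀ * Rmat x) Φ k := by
  induction k with
  | zero => simp [QSP, altPhaseProd_zero, phaseMat_eq_Emat]
  | succ k ih =>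
    rw [show 2 * (k + 1) = 2 * k + 1 + 1 by ring, QSP_succ, QSP_succ, ih, altPhaseProd_succ,
      phaseMat_eq_Emat, phaseMat_eq_Emat, ← mul_Emat_mul (Rmat_mul_self hx)]
    simp only [mul_assoc]

theorem QSP_two_mul_apply_zero_zero {x : ℝ} (hx : x ∈ Set.Icc (-1 : ℝ) 1) (Φ : ℕ → ℝ) (k : ℕ) :
    QSP (2 * k) Φ x 0 0 = (qsvtPoly Φ k).eval ((x : ℂ) ^ 2) := by
  have hQ : IsIdempotentElem (Rmat x * proj₀ * Rmat x) :=
    isIdempotentElem_proj₀.mul_mul_of_mul_eq_one (Rmat_mul_self hx)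
  have h := mul_altPhaseProd_mul isIdempotentElem_proj₀ hQ Φ k
  rw [← QSP_two_mul hx, proj₀_mul_Rmat_conj_mul_proj₀, aeval_diagonal] at h
  simpa [proj₀] using congr_fun₂ h 0 0

theorem qsvtPoly_eq_of_QSP_apply_zero_zero {Φ : ℕ → ℝ} {k : ℕ} {g : ℂ[X]}
    (h : ∀ x ∈ Set.Icc (-1 : ℝ) 1, QSP (2 * k) Φ x 0 0 = g.eval ((x : ℂ) ^ 2)) :
    qsvtPoly Φ k = g := by
  refine eq_of_infinite_eval_eq _ _
    (((Set.Icc_infinite (zero_lt_one' ℝ)).image ofReal_injective.injOn).mono ?_)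
  rintro _ ⟨t, ht, rfl⟩
  have hx : √t ∈ Set.Icc (-1 : ℝ) 1 :=
    ⟨by linarith [Real.sqrt_nonneg t], Real.sqrt_le_one.mpr ht.2⟩
  have hsq : ((√t : ℝ) : ℂ) ^ 2 = t := by rw [← ofReal_pow, Real.sq_sqrt ht.1]
  simp only [Set.mem_ofPred_eq]
  rw [← hsq, ← QSP_two_mul_apply_zero_zero hx, h _ hx]

theorem qsvt_even_general (d r c : ℕ) (U : Matrix (Fin d) (Fin d) ℂ)
    (hU1 : Uᴴ * U = 1) (hU2 : U * Uᴴ = 1)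
    (BL : Matrix (Fin d) (Fin r) ℂ) (BR : Matrix (Fin d) (Fin c) ℂ)
    (hBL : BLᴴ * BL = 1) (hBR : BRᴴ * BR = 1)
    (n : ℕ) (hn : Even n) (Φ : ℕ → ℝ)
    (p g : Polynomial ℂ)
    (hpg : p = g.comp (Polynomial.X ^ 2))
    (hqsp : ∀ x : ℝ, x ∈ Set.Icc (-1 : ℝ) 1 → (QSP n Φ x) 0 0 = p.eval (x : ℂ)) :
    (BR * BRᴴ) * phasedAltSeqEven U (BL * BLᴴ) (BR * BRᴴ) n Φ * (BR * BRᴴ) =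
      (BR * BRᴴ) *
        Polynomial.aeval
          (((BL * BLᴴ) * U * (BR * BRᴴ))ᴴ * ((BL * BLᴴ) * U * (BR * BRᴴ))) g *
        (BR * BRᴴ) := by
  obtain ⟨k, rfl⟩ := hn.two_dvd
  have hPL := isStarProjection_mul_conjTranspose hBL
  have hPR := isStarProjection_mul_conjTranspose hBR
  have hg : qsvtPoly Φ k = g :=
    qsvtPoly_eq_of_QSP_apply_zero_zero fun x hx => by rw [hqsp x hx, hpg, eval_comp]; simp
  rw [phasedAltSeqEven_two_mul hU1,
    mul_altPhaseProd_mul hPR.isIdempotentElem (hPL.isIdempotentElem.mul_mul_of_mul_eq_one hU2),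
    hg, ← star_eq_conjTranspose (BL * BLᴴ * U * (BR * BRᴴ)),
    star_mul_self_of_isStarProjection hPL hPR.isSelfAdjoint, star_eq_conjTranspose]

/-- **QSVT, even case** (Theorem 2.9): for an even QSP-achievable polynomial
`p(X) = g(X²)`, the phased alternating sequence block-encodes
`Π_R g(Mᴴ M) Π_R` where `M = Π_L U Π_R`. -/
theorem qsvt_even (d r c : ℕ) (U : Matrix (Fin d) (Fin d) ℂ)
    (hU1 : Uᴴ * U = 1) (hU2 : U * Uᴴ = 1)
    (BL : Matrix (Fin d) (Fin r) ℂ) (BR : Matrix (Fin d) (Fin c) ℂ)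
    (hBL : BLᴴ * BL = 1) (hBR : BRᴴ * BR = 1)
    (n : ℕ) (hn : Even n) (hn2 : 2 ≤ n) (Φ : ℕ → ℝ)
    (p g : Polynomial ℂ) (hdeg : p.degree ≤ n)
    (hpg : p = g.comp (Polynomial.X ^ 2))
    (hqsp : ∀ x : ℝ, x ∈ Set.Icc (-1 : ℝ) 1 → (QSP n Φ x) 0 0 = p.eval (x : ℂ)) :
    (BR * BRᴴ) * phasedAltSeqEven U (BL * BLᴴ) (BR * BRᴴ) n Φ * (BR * BRᴴ) =
      (BR * BRᴴ) *
        Polynomial.aeval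
          (((BL * BLᴴ) * U * (BR * BRᴴ))ᴴ * ((BL * BLᴴ) * U * (BR * BRᴴ))) g *
        (BR * BRᴴ) :=
  qsvt_even_general d r c U hU1 hU2 BL BR hBL hBR n hn Φ p g hpg hqsp
end

section
/- There exists a universal constant K > 0 such that for every real t ≠ 0, every ε ∈ (0, 1], and every natural number n with n ≥ K · ( |t| + log(1/ε) / log(e + log(1/ε)/|t|) ), the degree-n Chebyshev truncation p_n(x) := I_0(t) + 2·∑_{k=1}^{n} I_k(t)·T_k(x) satisfies |p_n(x) − e^{t·x}| ≤ ε for all x ∈ [−1, 1]. -/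
/-!
Multiplying the exponential series of `e^{(t/2)z}` and `e^{(t/2)/z}` gives the Laurent
expansion `e^{(t/2)(z + 1/z)} = ∑_{k ∈ ℤ} I_{|k|}(t) z^k` with
`I_k(t) = ∑_m (t/2)^{k+2m} / (m! (m+k)!)`. At `z = e^{iθ}` this is the Chebyshev series of
`e^{t cos θ}`, and orthogonality of the cosines on `[0, π]` identifies its coefficients with the
integrals defining `besselI`. As `(k+2m)! ≤ 2^{k+2m} m! (m+k)!`, we get
`|I_k(t)| ≤ |t|^k / k! · e^{|t|}`, so the error of the degree-`n` truncation is at most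
`2 e^{2|t|} |t|^N / N!` with `N = n + 1`. By `N! ≥ (N/e)^N` this is at most
`exp (log 2 + 2|t| - N log (N / (e|t|)))`, and with `K = 60` the degree condition makes
`log (N / (e|t|))` at least `3` and at least `log (e + L/|t|) / 10`, where `L = log (1/ε)`;
hence `N log (N / (e|t|)) ≥ L + 2|t| + log 2`.
-/

open Real Polynomial

/-- The modified Bessel function of the first kind (of integer order), via the
integral representation `I_k(t) = (1/π) ∫₀^π e^{t cos θ} cos(kθ) dθ`. -/
noncomputable def besselI (k : ℕ) (t : ℝ) : ℝ :=
  (1 / π) * ∫ θ in (0 : ℝ)..π, Real.exp (t * Real.cos θ) * Real.cos (k * θ)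

open MeasureTheory
open scoped Nat

noncomputable def besselITerm (k : ℕ) (t : ℝ) (m : ℕ) : ℝ :=
  (t / 2) ^ (k + 2 * m) / (m ! * (m + k)!)

noncomputable def besselISeries (k : ℕ) (t : ℝ) : ℝ :=
  ∑' m, besselITerm k t m

lemma abs_besselITerm (k : ℕ) (t : ℝ) (m : ℕ) :
    |besselITerm k t m| = besselITerm k |t| m := by
  simp [besselITerm, abs_div, abs_pow]

lemma factorial_le_two_pow_mul_factorial_mul_factorial (k m : ℕ) :
    (k + 2 * m)! ≤ 2 ^ (k + 2 * m) * (m ! * (m + k)!) := by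
  have h := Nat.choose_mul_factorial_mul_factorial (show m ≤ k + 2 * m by omega)
  rw [show k + 2 * m - m = m + k by omega] at h
  rw [← h, mul_assoc]
  exact Nat.mul_le_mul_right _ (Nat.choose_le_two_pow _ _)

lemma besselITerm_le {s : ℝ} (hs : 0 ≤ s) (k m : ℕ) :
    besselITerm k s m ≤ s ^ (k + 2 * m) / (k + 2 * m)! := by
  rw [besselITerm, div_pow, div_div]
  gcongr
  exact_mod_cast factorial_le_two_pow_mul_factorial_mul_factorial k m

lemma summable_pow_add_div_factorial (k : ℕ) (s : ℝ) :
    Summable fun j ↦ s ^ (k + j) / (k + j)! :=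
  (Real.summable_pow_div_factorial s).comp_injective (add_right_injective k)

lemma tsum_pow_add_div_factorial_le {s : ℝ} (hs : 0 ≤ s) (k : ℕ) :
    ∑' j, s ^ (k + j) / (k + j)! ≤ s ^ k / k ! * exp s := by
  rw [Real.exp_eq_exp_ℝ, ← (NormedSpace.expSeries_div_hasSum_exp s).tsum_eq, ← tsum_mul_left]
  refine (summable_pow_add_div_factorial k s).tsum_le_tsum (fun j ↦ ?_)
    ((Real.summable_pow_div_factorial s).mul_left _)
  rw [pow_add, div_mul_div_comm]
  gcongr
  exact_mod_cast
    Nat.le_of_dvd (Nat.factorial_pos _) (Nat.factorial_mul_factorial_dvd_factorial_add k j)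

lemma summable_besselITerm (k : ℕ) (t : ℝ) : Summable (besselITerm k t) := by
  refine .of_norm_bounded ((summable_pow_add_div_factorial k |t|).comp_injective
    (mul_right_injective₀ two_ne_zero)) fun m ↦ ?_
  rw [Real.norm_eq_abs, abs_besselITerm]
  exact besselITerm_le (abs_nonneg t) k m

lemma abs_besselISeries_le (k : ℕ) (t : ℝ) : |besselISeries k t| ≤ besselISeries k |t| :=
  tsum_of_norm_bounded (f := besselITerm k t) (summable_besselITerm k |t|).hasSum
    fun m ↦ (abs_besselITerm k t m).le

lemma abs_besselISeries_le_pow_div_factorial_mul_exp (k : ℕ) (t : ℝ) :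
    |besselISeries k t| ≤ |t| ^ k / k ! * exp |t| :=
  calc |besselISeries k t| ≤ besselISeries k |t| := abs_besselISeries_le k t
    _ ≤ ∑' j, |t| ^ (k + j) / (k + j)! :=
        (summable_besselITerm k |t|).tsum_le_tsum_of_inj (2 * ·)
          (mul_right_injective₀ two_ne_zero) (fun _ _ ↦ by positivity)
          (besselITerm_le (abs_nonneg t) k)
          (summable_pow_add_div_factorial k |t|)
    _ ≤ |t| ^ k / k ! * exp |t| := tsum_pow_add_div_factorial_le (abs_nonneg t) k

lemma exp_series_terms_mul_eq_besselITerm_mul_zpow (t : ℝ) {z : ℂ} (hz : z ≠ 0) (k : ℤ)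
    (m : ℕ) :
    (t / 2 * z) ^ (m + k.toNat) / (m + k.toNat)! *
        ((t / 2 * z⁻¹) ^ (m + (-k).toNat) / (m + (-k).toNat)!)
      = besselITerm k.natAbs t m * z ^ k := by
  obtain ⟨n, rfl | rfl⟩ := Int.eq_nat_or_neg k <;>
  · simp only [besselITerm, Int.toNat_natCast, Int.toNat_neg_natCast, neg_neg, Int.natAbs_neg,
      Int.natAbs_natCast, zpow_neg, zpow_natCast, add_zero, mul_pow, inv_pow, pow_add]
    push_cast
    field_simp
    ring

/-- Groups the monomials `z ^ i * z⁻¹ ^ j` of a product of two power series by the exponent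
`i - j`. -/
def subMinEquiv : ℕ × ℕ ≃ ℤ × ℕ where
  toFun p := ((p.1 : ℤ) - p.2, min p.1 p.2)
  invFun q := (q.2 + q.1.toNat, q.2 + (-q.1).toNat)
  left_inv p := by ext <;> simp only <;> omega
  right_inv q := by ext <;> simp only <;> omega

theorem hasSum_besselISeries_mul_zpow (t : ℝ) {z : ℂ} (hz : z ≠ 0) :
    HasSum (fun k : ℤ ↦ (besselISeries k.natAbs t : ℂ) * z ^ k)
      (Complex.exp (t / 2 * (z + z⁻¹))) := by
  have hexp (w : ℂ) : HasSum (fun j ↦ w ^ j / j !) (Complex.exp w) := by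
    rw [Complex.exp_eq_exp_ℂ]; exact NormedSpace.expSeries_div_hasSum_exp w
  have hsummable := summable_mul_of_summable_norm
    (NormedSpace.norm_expSeries_div_summable (t / 2 * z : ℂ))
    (NormedSpace.norm_expSeries_div_summable (t / 2 * z⁻¹ : ℂ))
  have hprod := (hexp (t / 2 * z)).mul (hexp (t / 2 * z⁻¹)) hsummable
  rw [← Complex.exp_add, ← mul_add] at hprod
  refine (subMinEquiv.symm.hasSum_iff.2 hprod).prod_fiberwise fun k ↦ ?_
  have h :=
    (Complex.hasSum_ofReal.2 (summable_besselITerm k.natAbs t).hasSum).mul_right (z ^ k)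
  simp only [← exp_series_terms_mul_eq_besselITerm_mul_zpow t hz] at h
  exact h

theorem hasSum_besselISeries_mul_cos (t θ : ℝ) :
    HasSum (fun k : ℤ ↦ besselISeries k.natAbs t * cos (k * θ)) (exp (t * cos θ)) := by
  have h := Complex.hasSum_re
    (hasSum_besselISeries_mul_zpow t (Complex.exp_ne_zero (θ * Complex.I)))
  have hcos : Complex.exp (θ * Complex.I) + (Complex.exp (θ * Complex.I))⁻¹ = 2 * cos θ := by
    rw [← Complex.exp_neg, Complex.ofReal_cos, Complex.cos, neg_mul]
    ring
  convert h using 1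
  · ext k
    rw [← Complex.exp_int_mul, ← mul_assoc, ← Complex.ofReal_intCast, ← Complex.ofReal_mul,
      Complex.re_ofReal_mul, Complex.exp_ofReal_mul_I_re]
  · rw [hcos, ← Complex.ofReal_ofNat, ← Complex.ofReal_div, ← Complex.ofReal_mul,
      ← Complex.ofReal_mul, ← Complex.ofReal_exp, Complex.ofReal_re]
    ring_nf

theorem hasSum_two_mul_besselISeries_mul_cos (t θ : ℝ) :
    HasSum (fun k : ℕ ↦ 2 * besselISeries k t * cos (k * θ))
      (exp (t * cos θ) + besselISeries 0 t) := by
  convert (hasSum_besselISeries_mul_cos t θ).nat_add_neg using 1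
  · ext k
    simp only [Int.natAbs_neg, Int.natAbs_natCast, Int.cast_neg, Int.cast_natCast, neg_mul,
      cos_neg]
    ring
  · simp

lemma integral_cos_intCast_mul (m : ℤ) :
    ∫ θ in (0 : ℝ)..π, cos (m * θ) = if m = 0 then π else 0 := by
  split_ifs with hm
  · simp [hm]
  · rw [intervalIntegral.integral_comp_mul_left cos (Int.cast_ne_zero.2 hm), integral_cos]
    simp [sin_int_mul_pi]

lemma integral_cos_mul_cos (j k : ℤ) :
    ∫ θ in (0 : ℝ)..π, cos (j * θ) * cos (k * θ)
      = π / 2 * ((if j = k then 1 else 0) + if j = -k then 1 else 0) := by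
  have hprod (θ : ℝ) :
      cos (j * θ) * cos (k * θ) = (cos ((j - k : ℤ) * θ) + cos ((j + k : ℤ) * θ)) / 2 := by
    push_cast
    rw [sub_mul, add_mul, cos_sub, cos_add]
    ring
  have hint (m : ℤ) : IntervalIntegrable (fun θ ↦ cos (m * θ)) volume 0 π :=
    (continuous_cos.comp (continuous_const_mul _)).intervalIntegrable 0 π
  simp only [hprod, intervalIntegral.integral_div, intervalIntegral.integral_add (hint _) (hint _),
    integral_cos_intCast_mul, sub_eq_zero, add_eq_zero_iff_eq_neg]
  split_ifs <;> ring

lemma hasSum_besselISeries_mul_integral_cos_mul_cos (k : ℕ) (t : ℝ) :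
    HasSum
      (fun j : ℤ ↦
        besselISeries j.natAbs t * ∫ θ in (0 : ℝ)..π, cos (j * θ) * cos (k * θ))
      (π * besselISeries k t) := by
  rw [show π * besselISeries k t = π / 2 * (besselISeries k t + besselISeries k t) by ring]
  refine (((hasSum_ite_eq (k : ℤ) (besselISeries k t)).add
    (hasSum_ite_eq (-k : ℤ) (besselISeries k t))).mul_left (π / 2)).congr_fun fun j ↦ ?_
  rw [← Int.cast_natCast k, integral_cos_mul_cos]
  split_ifs <;> simp_all <;> ring

theorem besselI_eq_besselISeries (k : ℕ) (t : ℝ) : besselI k t = besselISeries k t := by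
  have hcont (j : ℤ) :
      Continuous fun θ ↦ besselISeries j.natAbs t * cos (j * θ) * cos (k * θ) := by
    fun_prop
  have hsum := intervalIntegral.hasSum_integral_of_dominated_convergence
    (F := fun (j : ℤ) θ ↦ besselISeries j.natAbs t * cos (j * θ) * cos (k * θ))
    (f := fun θ ↦ exp (t * cos θ) * cos (k * θ)) (μ := volume) (a := 0) (b := π)
    (fun j _ ↦ besselISeries j.natAbs |t|) (fun j ↦ (hcont j).aestronglyMeasurable)
    (fun j ↦ ae_of_all _ fun θ _ ↦ ?_)
    (ae_of_all _ fun θ _ ↦ ?_) intervalIntegrable_const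
    (ae_of_all _ fun θ _ ↦ (hasSum_besselISeries_mul_cos t θ).mul_right _)
  · simp only [mul_assoc, intervalIntegral.integral_const_mul] at hsum
    rw [besselI, hsum.unique (hasSum_besselISeries_mul_integral_cos_mul_cos k t)]
    field_simp
  · rw [norm_mul, norm_mul, Real.norm_eq_abs, Real.norm_eq_abs, Real.norm_eq_abs]
    calc _ ≤ |besselISeries j.natAbs t| * 1 * 1 := by
          gcongr <;> exact abs_cos_le_one _
      _ ≤ besselISeries j.natAbs |t| := by
          simpa only [mul_one] using abs_besselISeries_le j.natAbs t
  · simpa using (hasSum_besselISeries_mul_cos |t| 0).summable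

lemma sum_Icc_one_eq_sum_range_succ_sub {M : Type*} [AddCommGroup M] (f : ℕ → M) (n : ℕ) :
    ∑ k ∈ Finset.Icc 1 n, f k = ∑ k ∈ Finset.range (n + 1), f k - f 0 := by
  rw [Finset.sum_range_succ', ← Finset.Ico_add_one_right_eq_Icc, Finset.sum_Ico_eq_sum_range]
  simp [add_comm]

theorem abs_exp_mul_cos_sub_partial_sum_le (t θ : ℝ) (n : ℕ) :
    |exp (t * cos θ) -
        (besselISeries 0 t + 2 * ∑ k ∈ Finset.Icc 1 n, besselISeries k t * cos (k * θ))|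
      ≤ 2 * exp (2 * |t|) * (|t| ^ (n + 1) / (n + 1)!) := by
  have htail := (hasSum_nat_add_iff' (n + 1)).2 (hasSum_two_mul_besselISeries_mul_cos t θ)
  have hbound := ((summable_pow_add_div_factorial (n + 1) |t|).hasSum.mul_left (2 * exp |t|))
  calc _ = ‖exp (t * cos θ) + besselISeries 0 t
          - ∑ k ∈ Finset.range (n + 1), 2 * besselISeries k t * cos (k * θ)‖ := by
        rw [Real.norm_eq_abs, Finset.mul_sum, sum_Icc_one_eq_sum_range_succ_sub]
        simp only [mul_assoc, CharP.cast_eq_zero, zero_mul, cos_zero, mul_one]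
        congr 1
        ring
    _ ≤ 2 * exp |t| * ∑' j, |t| ^ (n + 1 + j) / (n + 1 + j)! :=
        htail.norm_le_of_bounded hbound fun j ↦ by
          rw [Real.norm_eq_abs, abs_mul, abs_mul, abs_two, add_comm j]
          calc 2 * |besselISeries (n + 1 + j) t| * |cos _|
              ≤ 2 * |besselISeries (n + 1 + j) t| * 1 := by gcongr; exact abs_cos_le_one _
            _ ≤ 2 * (|t| ^ (n + 1 + j) / (n + 1 + j)! * exp |t|) := by
                rw [mul_one]; gcongr; exact abs_besselISeries_le_pow_div_factorial_mul_exp _ t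
            _ = _ := by ring
    _ ≤ 2 * exp |t| * (|t| ^ (n + 1) / (n + 1)! * exp |t|) := by
        gcongr
        exact tsum_pow_add_div_factorial_le (abs_nonneg t) (n + 1)
    _ = 2 * exp (2 * |t|) * (|t| ^ (n + 1) / (n + 1)!) := by
        rw [two_mul |t|, exp_add]
        ring

lemma pow_div_factorial_le_exp_neg_mul_log {s : ℝ} (hs : 0 < s) {m : ℕ} (hm : 0 < m) :
    s ^ m / m ! ≤ exp (-(m * log (m / (exp 1 * s)))) := by
  have hm' : (0 : ℝ) < m := Nat.cast_pos.2 hm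
  rw [← mul_neg, exp_nat_mul, ← log_inv, exp_log (by positivity), inv_div, div_pow, mul_pow,
    exp_one_pow, div_le_div_iff₀ (by positivity) (by positivity)]
  have hfac := (div_le_iff₀ (by positivity)).1 (pow_div_factorial_le_exp (m : ℝ) hm'.le m)
  calc s ^ m * m ^ m ≤ s ^ m * (exp m * m !) := by gcongr
    _ = exp m * s ^ m * m ! := by ring

lemma mul_exp_div_ten_le (M : ℝ) : M * exp (M / 10) ≤ 10 * exp M := by
  have h : 0 ≤ 10 * exp (9 * M / 10) - M := by
    linarith [add_one_le_exp (9 * M / 10), exp_pos (9 * M / 10)]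
  have hsplit : exp M = exp (M / 10) * exp (9 * M / 10) := by rw [← exp_add]; ring_nf
  rw [hsplit]
  nlinarith [mul_nonneg (exp_pos (M / 10)).le h]

lemma three_le_log_div {s N : ℝ} (hs : 0 < s) (hN : 60 * s ≤ N) :
    3 ≤ log (N / (exp 1 * s)) := by
  have hexp4 : exp 4 ≤ 60 := by
    rw [show (4 : ℝ) = (4 : ℕ) by norm_num, ← exp_one_pow]
    nlinarith [exp_one_lt_d9, exp_pos 1, pow_le_pow_left₀ (exp_pos 1).le exp_one_lt_d9.le 4]
  rw [le_log_iff_exp_le (div_pos (by linarith) (by positivity)), le_div_iff₀ (by positivity),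
    ← mul_assoc, ← exp_add]
  norm_num
  nlinarith

lemma log_exp_one_add_div_le {s L N : ℝ} (hs : 0 < s) (hL : 0 ≤ L) (hNs : 60 * s ≤ N)
    (hNL : 60 * L ≤ N * log (exp 1 + L / s)) :
    log (exp 1 + L / s) ≤ 10 * log (N / (exp 1 * s)) := by
  set v := exp 1 + L / s with hv
  have hLs : 0 ≤ L / s := div_nonneg hL hs.le
  have hv0 : 0 < v := by positivity
  have hM : 1 ≤ log v := by
    rw [← log_exp 1]
    exact log_le_log (exp_pos 1) (by linarith)
  have h3 := three_le_log_div hs hNs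
  rcases le_or_gt v (2 * exp 1) with hv2 | hv2
  · have : log v ≤ log 2 + 1 :=
      calc log v ≤ log (2 * exp 1) := log_le_log hv0 hv2
        _ = log 2 + 1 := by rw [log_mul two_ne_zero (exp_pos 1).ne', log_exp]
    linarith [log_two_lt_d9]
  · -- Here `L / s ≥ v / 2`, so `N / (e s) ≥ 10 v / log v ≥ exp (log v / 10)`.
    have hR : 10 * v ≤ log v * (N / (exp 1 * s)) := by
      rw [mul_div_assoc', le_div_iff₀ (by positivity)]
      have hvL : s * v ≤ 2 * L := by
        rw [← mul_div_cancel₀ L hs.ne', mul_left_comm]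
        exact mul_le_mul_of_nonneg_left (by linarith) hs.le
      nlinarith [exp_one_lt_d9, mul_pos hv0 hs]
    rw [← div_le_iff₀' (by norm_num), le_log_iff_exp_le (by nlinarith [exp_pos 1])]
    refine le_of_mul_le_mul_left ?_ (by linarith : 0 < log v)
    calc log v * exp (log v / 10) ≤ 10 * exp (log v) := mul_exp_div_ten_le _
      _ ≤ log v * (N / (exp 1 * s)) := by rwa [exp_log hv0]

lemma add_le_mul_log_div {s L N : ℝ} (hs : 0 < s) (hL : 0 ≤ L) (hN : 1 ≤ N)
    (hNs : 60 * s ≤ N) (hNL : 60 * L ≤ N * log (exp 1 + L / s)) :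
    L + 2 * s + log 2 ≤ N * log (N / (exp 1 * s)) := by
  have h3 := three_le_log_div hs hNs
  have h10 := log_exp_one_add_div_le hs hL hNs hNL
  nlinarith [log_two_lt_d9]

theorem two_mul_exp_mul_pow_div_factorial_le {s L : ℝ} (hs : 0 < s) (hL : 0 ≤ L) {n : ℕ}
    (hn : 60 * (s + L / log (exp 1 + L / s)) ≤ n) :
    2 * exp (2 * s) * (s ^ (n + 1) / (n + 1)!) ≤ exp (-L) := by
  have hM : 0 < log (exp 1 + L / s) :=
    log_pos (by linarith [add_one_le_exp 1, div_nonneg hL hs.le])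
  have hLM : 0 ≤ L / log (exp 1 + L / s) := div_nonneg hL hM.le
  have hNL : 60 * L ≤ (n + 1 : ℕ) * log (exp 1 + L / s) := by
    rw [← div_le_iff₀ hM, mul_div_assoc]
    push_cast
    linarith
  have hkey := add_le_mul_log_div hs hL (by simp) (by push_cast; linarith) hNL
  calc 2 * exp (2 * s) * (s ^ (n + 1) / (n + 1)!)
      ≤ 2 * exp (2 * s) * exp (-((n + 1 : ℕ) * log ((n + 1 : ℕ) / (exp 1 * s)))) := by
        gcongr
        exact pow_div_factorial_le_exp_neg_mul_log hs n.succ_pos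
    _ = exp (log 2 + 2 * s - (n + 1 : ℕ) * log ((n + 1 : ℕ) / (exp 1 * s))) := by
        rw [sub_eq_add_neg, exp_add, exp_add, exp_log two_pos]
    _ ≤ exp (-L) := exp_le_exp.2 (by linarith)

/-- **Chebyshev truncation of the exponential, small-`ε` regime**
(Theorem 3.5, case `ε ≤ 1`): degree
`n ≳ |t| + log(1/ε)/log(e + log(1/ε)/|t|)` suffices for an `ε`-uniform
approximation of `e^{tx}` on `[-1, 1]`. -/
theorem exp_chebyshev_truncation_small_eps :
    ∃ K : ℝ, 0 < K ∧
      ∀ t : ℝ, t ≠ 0 → ∀ ε : ℝ, 0 < ε → ε ≤ 1 → ∀ n : ℕ,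
        (n : ℝ) ≥
          K * (|t| + Real.log (1 / ε) /
            Real.log (Real.exp 1 + Real.log (1 / ε) / |t|)) →
        ∀ x : ℝ, x ∈ Set.Icc (-1 : ℝ) 1 →
          |besselI 0 t +
              2 * ∑ k ∈ Finset.Icc 1 n,
                besselI k t * (Polynomial.Chebyshev.T ℝ (k : ℤ)).eval x -
            Real.exp (t * x)| ≤ ε := by
  refine ⟨60, by norm_num, fun t ht ε hε hε1 n hn x hx ↦ ?_⟩
  obtain ⟨θ, rfl⟩ : ∃ θ, cos θ = x := ⟨arccos x, cos_arccos hx.1 hx.2⟩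
  have hL : 0 ≤ log (1 / ε) := log_nonneg (one_le_one_div hε hε1)
  simp only [besselI_eq_besselISeries, Chebyshev.T_real_cos, Int.cast_natCast]
  rw [abs_sub_comm]
  calc _ ≤ 2 * exp (2 * |t|) * (|t| ^ (n + 1) / (n + 1)!) :=
        abs_exp_mul_cos_sub_partial_sum_le t θ n
    _ ≤ exp (-log (1 / ε)) := two_mul_exp_mul_pow_div_factorial_le (abs_pos.2 ht) hL hn
    _ = ε := by rw [one_div, log_inv, neg_neg, exp_log hε]
end

section
/- There exists a universal constant C ≥ 1 with the following property. For every δ ∈ (0, 1) and ε ∈ (0, 1), there exists an odd polynomial p ∈ ℝ[X] (meaning p(−x) = −p(x) for all x) of degree at most C·(1/δ)·log(1/(δ·ε)) such that |p(x)| ≤ 1 for all x ∈ [−1, 1] and |p(x) − (2/π)·arcsin(x)| ≤ ε for all x ∈ [−(1−δ), 1−δ]. -/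
open Real Polynomial Set

/-!
`arcsin` is approximated by its truncated Maclaurin series
`P_n(x) = ∑_{k ≤ n} c_k x^(2k+1) / (2k+1)`, `c_k = binom(2k, k) / 4^k`. Its derivative is the
partial sum `S_n(x²)` of the binomial series `(1 - u)^(-1/2) = ∑ c_k u^k`. As `√(1 - u) S_n(u)`
has derivative `-(n+1) c_(n+1) u^n / √(1 - u)` and `0 < c_k ≤ 1`, comparing derivatives gives
`0 ≤ (1 - u)^(-1/2) - S_n(u) ≤ u^(n+1) / (1 - u)`; integrating, `0 ≤ arcsin x - P_n(x)` and
`|arcsin x - P_n(x)| ≤ a^(2n+2) / (1 - a²)` for `|x| ≤ a`, which is at most `ε` for `a = 1 - δ`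
and `n ≈ log(1/(δε)) / (2δ)`. The coefficients of `P_n` are positive, so on `[-1, 1]`
`|P_n| ≤ P_n(1) ≤ arcsin 1 = π/2`. When `ε ≥ 1 - δ` the zero polynomial already works, by
Jordan's inequality `|arcsin x| ≤ (π/2) |x|`; otherwise `log(1/(δε)) ≥ 1`, which absorbs the
rounding of `n` into the constant.
-/

theorem le_of_hasDerivAt_le {f g f' g' : ℝ → ℝ} {a b : ℝ} (hab : a ≤ b)
    (hf : ∀ t ∈ Icc a b, HasDerivAt f (f' t) t) (hg : ∀ t ∈ Icc a b, HasDerivAt g (g' t) t)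
    (ha : f a ≤ g a) (hle : ∀ t ∈ Ico a b, f' t ≤ g' t) : f b ≤ g b :=
  image_le_of_deriv_right_le_deriv_boundary
    (fun t ht => (hf t ht).continuousAt.continuousWithinAt)
    (fun t ht => (hf t (Ico_subset_Icc_self ht)).hasDerivWithinAt) ha
    (fun t ht => (hg t ht).continuousAt.continuousWithinAt)
    (fun t ht => (hg t (Ico_subset_Icc_self ht)).hasDerivWithinAt) hle (right_mem_Icc.2 hab)

noncomputable def invSqrtCoeff (k : ℕ) : ℝ := k.centralBinom / 4 ^ k

lemma invSqrtCoeff_pos (k : ℕ) : 0 < invSqrtCoeff k := by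
  have := k.centralBinom_pos
  unfold invSqrtCoeff
  positivity

lemma invSqrtCoeff_le_one (k : ℕ) : invSqrtCoeff k ≤ 1 :=
  div_le_one_of_le₀ (by exact_mod_cast k.centralBinom_le_four_pow) (by positivity)

lemma invSqrtCoeff_zero : invSqrtCoeff 0 = 1 := by simp [invSqrtCoeff]

lemma invSqrtCoeff_succ (k : ℕ) :
    invSqrtCoeff (k + 1) = invSqrtCoeff k * (2 * k + 1) / (2 * k + 2) := by
  have h : ((k + 1 : ℕ) : ℝ) * (k + 1).centralBinom = 2 * (2 * k + 1) * k.centralBinom := by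
    exact_mod_cast k.succ_mul_centralBinom_succ
  unfold invSqrtCoeff
  push_cast at h
  field_simp
  linear_combination 4 ^ k * 2 * h

noncomputable def invSqrtTaylor (n : ℕ) (u : ℝ) : ℝ :=
  ∑ k ∈ Finset.range (n + 1), invSqrtCoeff k * u ^ k

lemma hasDerivAt_sqrt_one_sub_mul_invSqrtTaylor (n : ℕ) {u : ℝ} (hu : u < 1) :
    HasDerivAt (fun t => √(1 - t) * invSqrtTaylor n t)
      (-((n + 1) * invSqrtCoeff (n + 1) * u ^ n / √(1 - u))) u := by
  have hs : √(1 - u) ≠ 0 := (sqrt_pos.2 (sub_pos.2 hu)).ne'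
  have hsq : √(1 - u) ^ 2 = 1 - u := sq_sqrt (sub_pos.2 hu).le
  have hsqrt : HasDerivAt (fun t => √(1 - t)) (-1 / (2 * √(1 - u))) u := by
    simpa using ((hasDerivAt_id u).const_sub 1).sqrt (sub_pos.2 hu).ne'
  induction n with
  | zero =>
    have hfun : (fun t => √(1 - t) * invSqrtTaylor 0 t) = fun t => √(1 - t) := by
      ext t
      simp [invSqrtTaylor, invSqrtCoeff_zero]
    rw [hfun]
    refine hsqrt.congr_deriv ?_
    rw [invSqrtCoeff_succ, invSqrtCoeff_zero]
    field_simp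
    ring
  | succ n ih =>
    have hfun : (fun t => √(1 - t) * invSqrtTaylor (n + 1) t) =
        fun t => √(1 - t) * invSqrtTaylor n t +
          invSqrtCoeff (n + 1) * (√(1 - t) * t ^ (n + 1)) := by
      ext t
      rw [invSqrtTaylor, Finset.sum_range_succ, ← invSqrtTaylor]
      ring
    rw [hfun]
    refine (ih.add ((hsqrt.mul (hasDerivAt_pow (n + 1) u)).const_mul _)).congr_deriv ?_
    rw [invSqrtCoeff_succ (n + 1)]
    field_simp
    push_cast
    linear_combination (2 * n + 2) * invSqrtCoeff (n + 1) * u ^ n * hsq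

lemma invSqrtTaylor_zero_right (n : ℕ) : invSqrtTaylor n 0 = 1 := by
  simp [invSqrtTaylor, Finset.sum_range_succ', invSqrtCoeff_zero]

lemma inv_sqrt_one_sub_sub_invSqrtTaylor_mem_Icc (n : ℕ) {u : ℝ} (h0 : 0 ≤ u) (h1 : u < 1) :
    (√(1 - u))⁻¹ - invSqrtTaylor n u ∈ Icc 0 (u ^ (n + 1) / (1 - u)) := by
  have hderiv := fun t (ht : t ∈ Icc 0 u) =>
    hasDerivAt_sqrt_one_sub_mul_invSqrtTaylor n (ht.2.trans_lt h1)
  have hsu : 0 < √(1 - u) := sqrt_pos.2 (sub_pos.2 h1)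
  have hle_one : √(1 - u) * invSqrtTaylor n u ≤ 1 := by
    refine le_of_hasDerivAt_le h0 hderiv (fun t _ => hasDerivAt_const t (1 : ℝ))
      (by simp [invSqrtTaylor_zero_right]) fun t ht => ?_
    have := invSqrtCoeff_pos (n + 1)
    have := ht.1
    simp only [neg_nonpos]
    positivity
  have hge : 1 - u ^ (n + 1) / √(1 - u) ≤ √(1 - u) * invSqrtTaylor n u := by
    refine le_of_hasDerivAt_le h0
      (fun t _ => ((hasDerivAt_pow (n + 1) t).div_const _).const_sub 1) hderiv
      (by simp [invSqrtTaylor_zero_right]) fun t ht => ?_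
    have := invSqrtCoeff_pos (n + 1)
    have := ht.1
    rw [neg_le_neg_iff]
    push_cast
    refine div_le_div₀ (by positivity) ?_ hsu (sqrt_le_sqrt (by linarith [ht.2]))
    rw [mul_right_comm]
    exact mul_le_of_le_one_right (by positivity) (invSqrtCoeff_le_one (n + 1))
  have hsq : √(1 - u) * √(1 - u) = 1 - u := mul_self_sqrt (sub_pos.2 h1).le
  have hrem : (√(1 - u))⁻¹ - invSqrtTaylor n u =
      (1 - √(1 - u) * invSqrtTaylor n u) / √(1 - u) := by
    field_simp
  rw [hrem]
  refine ⟨div_nonneg (sub_nonneg.2 hle_one) hsu.le, ?_⟩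
  calc (1 - √(1 - u) * invSqrtTaylor n u) / √(1 - u)
      ≤ u ^ (n + 1) / √(1 - u) / √(1 - u) := by
        gcongr
        linarith
    _ = u ^ (n + 1) / (1 - u) := by rw [div_div, hsq]

noncomputable def arcsinTaylor (n : ℕ) : ℝ[X] :=
  ∑ k ∈ Finset.range (n + 1), C (invSqrtCoeff k / (2 * k + 1)) * X ^ (2 * k + 1)

lemma eval_arcsinTaylor (n : ℕ) (x : ℝ) :
    (arcsinTaylor n).eval x =
      ∑ k ∈ Finset.range (n + 1), invSqrtCoeff k / (2 * k + 1) * x ^ (2 * k + 1) := by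
  simp [arcsinTaylor, eval_finsetSum]

lemma eval_neg_arcsinTaylor (n : ℕ) (x : ℝ) :
    (arcsinTaylor n).eval (-x) = -(arcsinTaylor n).eval x := by
  simp only [eval_arcsinTaylor, ← Finset.sum_neg_distrib, Odd.neg_pow (odd_two_mul_add_one _),
    mul_neg]

lemma natDegree_arcsinTaylor_le (n : ℕ) : (arcsinTaylor n).natDegree ≤ 2 * n + 1 :=
  natDegree_sum_le_of_forall_le _ _ fun k hk =>
    (natDegree_C_mul_X_pow_le _ _).trans (by have := Finset.mem_range.1 hk; omega)

lemma hasDerivAt_arcsinTaylor (n : ℕ) (x : ℝ) :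
    HasDerivAt (fun x => (arcsinTaylor n).eval x) (invSqrtTaylor n (x ^ 2)) x := by
  refine ((arcsinTaylor n).hasDerivAt x).congr_deriv ?_
  simp only [arcsinTaylor, derivative_sum, derivative_C_mul_X_pow, eval_finsetSum, eval_C_mul,
    eval_pow, eval_X, invSqrtTaylor]
  refine Finset.sum_congr rfl fun k _ => ?_
  push_cast
  field_simp
  ring

lemma abs_eval_arcsinTaylor_le_eval_one (n : ℕ) {x : ℝ} (hx : |x| ≤ 1) :
    |(arcsinTaylor n).eval x| ≤ (arcsinTaylor n).eval 1 := by
  rw [eval_arcsinTaylor, eval_arcsinTaylor]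
  refine (Finset.abs_sum_le_sum_abs _ _).trans (Finset.sum_le_sum fun k _ => ?_)
  have := invSqrtCoeff_pos k
  rw [abs_mul, abs_pow, abs_of_pos (by positivity), one_pow, mul_one]
  exact mul_le_of_le_one_right (by positivity) (pow_le_one₀ (abs_nonneg x) hx)

lemma arcsin_sub_eval_arcsinTaylor_mem_Icc (n : ℕ) {a x : ℝ} (ha : a < 1) (hx0 : 0 ≤ x)
    (hxa : x ≤ a) :
    arcsin x - (arcsinTaylor n).eval x ∈ Icc 0 (a ^ (2 * n + 2) / (1 - a ^ 2) * x) := by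
  have hderiv : ∀ t ∈ Icc 0 x, HasDerivAt (fun t => arcsin t - (arcsinTaylor n).eval t)
      ((√(1 - t ^ 2))⁻¹ - invSqrtTaylor n (t ^ 2)) t := fun t ht => by
    rw [← one_div]
    exact (hasDerivAt_arcsin (by linarith [ht.1]) (by linarith [ht.2])).sub
      (hasDerivAt_arcsinTaylor n t)
  have hbound : ∀ t ∈ Icc 0 x, (√(1 - t ^ 2))⁻¹ - invSqrtTaylor n (t ^ 2) ∈
      Icc 0 (a ^ (2 * n + 2) / (1 - a ^ 2)) := fun t ht => by
    have hta : t ^ 2 ≤ a ^ 2 := pow_le_pow_left₀ ht.1 (ht.2.trans hxa) 2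
    have ha2 : a ^ 2 < 1 := by nlinarith [ht.1]
    obtain ⟨h0, h1⟩ :=
      inv_sqrt_one_sub_sub_invSqrtTaylor_mem_Icc n (sq_nonneg t) (hta.trans_lt ha2)
    refine ⟨h0, h1.trans ?_⟩
    calc (t ^ 2) ^ (n + 1) / (1 - t ^ 2) ≤ (a ^ 2) ^ (n + 1) / (1 - a ^ 2) := by
          gcongr
      _ = a ^ (2 * n + 2) / (1 - a ^ 2) := by ring
  constructor
  · simpa using le_of_hasDerivAt_le hx0 (fun t _ => hasDerivAt_const t (0 : ℝ)) hderiv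
      (by simp [eval_arcsinTaylor]) fun t ht => (hbound t (Ico_subset_Icc_self ht)).1
  · simpa using le_of_hasDerivAt_le hx0 hderiv (fun t _ => (hasDerivAt_id t).const_mul _)
      (by simp [eval_arcsinTaylor]) fun t ht => by simpa using (hbound t (Ico_subset_Icc_self ht)).2

lemma eval_arcsinTaylor_le_arcsin (n : ℕ) {x : ℝ} (hx0 : 0 ≤ x) (hx1 : x < 1) :
    (arcsinTaylor n).eval x ≤ arcsin x :=
  sub_nonneg.1 (arcsin_sub_eval_arcsinTaylor_mem_Icc n hx1 hx0 le_rfl).1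

lemma eval_one_arcsinTaylor_le (n : ℕ) : (arcsinTaylor n).eval 1 ≤ π / 2 :=
  le_of_tendsto ((arcsinTaylor n).continuous.continuousWithinAt (s := Iio 1)) <| by
    filter_upwards [Ico_mem_nhdsLT (zero_lt_one' ℝ)] with x hx
    exact (eval_arcsinTaylor_le_arcsin n hx.1 hx.2).trans (arcsin_le_pi_div_two x)

lemma abs_arcsin_sub_eval_arcsinTaylor_le (n : ℕ) {a x : ℝ} (ha : a < 1) (hx : |x| ≤ a) :
    |arcsin x - (arcsinTaylor n).eval x| ≤ a ^ (2 * n + 2) / (1 - a ^ 2) := by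
  obtain ⟨h0, h1⟩ := arcsin_sub_eval_arcsinTaylor_mem_Icc n ha (abs_nonneg x) hx
  have habs : |arcsin x - (arcsinTaylor n).eval x| = arcsin |x| - (arcsinTaylor n).eval |x| := by
    rcases abs_choice x with h | h <;> rw [h] at h0 ⊢
    · exact abs_of_nonneg h0
    · rw [arcsin_neg, eval_neg_arcsinTaylor] at h0 ⊢
      rw [abs_of_nonpos (by linarith)]
      ring
  have hM : 0 ≤ a ^ (2 * n + 2) / (1 - a ^ 2) := by
    have := (abs_nonneg x).trans hx
    have : a ^ 2 < 1 := by nlinarith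
    positivity
  rw [habs]
  exact h1.trans (mul_le_of_le_one_right hM (hx.trans ha.le))

lemma abs_two_div_pi_mul_arcsin_le {x : ℝ} (hx : |x| ≤ 1) : |2 / π * arcsin x| ≤ |x| := by
  have hjordan := mul_le_sin (arcsin_nonneg.2 (abs_nonneg x)) (arcsin_le_pi_div_two |x|)
  rw [sin_arcsin (by linarith [abs_nonneg x]) hx] at hjordan
  have habs : |arcsin x| = arcsin |x| := by
    rcases abs_choice x with h | h <;> rw [h]
    · exact abs_of_nonneg (arcsin_nonneg.2 (abs_eq_self.1 h))
    · rw [arcsin_neg]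
      exact abs_of_nonpos (arcsin_nonpos.2 (abs_eq_neg_self.1 h))
  rwa [abs_mul, abs_of_pos (by positivity), habs]

lemma one_le_log_one_div_mul {δ ε : ℝ} (hδ : 0 < δ) (hε : 0 < ε) (hεδ : ε < 1 - δ) :
    1 ≤ log (1 / (δ * ε)) := by
  have hδε : δ * ε ≤ 1 / 4 := by nlinarith [sq_nonneg (2 * δ - 1)]
  rw [le_log_iff_exp_le (by positivity), le_div_iff₀ (by positivity)]
  nlinarith [exp_one_lt_d9, exp_pos 1, mul_pos hδ hε]

lemma two_mul_ceil_add_one_le {δ L : ℝ} (hδ0 : 0 < δ) (hδ1 : δ ≤ 1) (hL : 1 ≤ L) :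
    (2 * ⌈L / (2 * δ)⌉₊ + 1 : ℝ) ≤ 4 * (1 / δ) * L := by
  have hceil := Nat.ceil_lt_add_one (by positivity : 0 ≤ L / (2 * δ))
  have hLδ : L ≤ L / δ := le_div_self (by linarith) hδ0 hδ1
  have hhalf : 2 * (L / (2 * δ)) = L / δ := by field_simp
  calc (2 * ⌈L / (2 * δ)⌉₊ + 1 : ℝ) ≤ L / δ + 3 * (L / δ) := by linarith
    _ = 4 * (1 / δ) * L := by ring

lemma one_sub_pow_div_le {δ ε : ℝ} (hδ0 : 0 < δ) (hδ1 : δ < 1) (hε : 0 < ε) {n : ℕ}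
    (hn : log (1 / (δ * ε)) / (2 * δ) ≤ n) :
    (1 - δ) ^ (2 * n + 2) / (1 - (1 - δ) ^ 2) ≤ ε := by
  rw [div_le_iff₀ (by positivity)] at hn
  have hpow : (1 - δ) ^ (2 * n + 2) ≤ δ * ε :=
    calc (1 - δ) ^ (2 * n + 2) ≤ (1 - δ) ^ (2 * n) :=
          pow_le_pow_of_le_one (by linarith) (by linarith) (by omega)
      _ ≤ exp (-δ) ^ (2 * n) := pow_le_pow_left₀ (by linarith) (one_sub_le_exp_neg δ) _
      _ = exp (-(n * (2 * δ))) := by rw [← exp_nat_mul]; push_cast; ring_nf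
      _ ≤ exp (-log (1 / (δ * ε))) := exp_le_exp.2 (neg_le_neg hn)
      _ = δ * ε := by rw [exp_neg, exp_log (by positivity)]; simp
  rw [div_le_iff₀ (by nlinarith)]
  nlinarith [mul_nonneg (mul_nonneg hε.le hδ0.le) (sub_nonneg.2 hδ1.le)]

/-- **Bounded polynomial approximation of arcsin** (Corollary 3.14): there is
an odd polynomial of degree `O((1/δ) log(1/(δε)))`, bounded by `1` on
`[-1, 1]` and `ε`-close to `(2/π) arcsin(x)` on `[-(1-δ), 1-δ]`. -/
theorem arcsin_bounded_approx :
    ∃ C : ℝ, 1 ≤ C ∧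
      ∀ δ ε : ℝ, 0 < δ → δ < 1 → 0 < ε → ε < 1 →
        ∃ p : Polynomial ℝ,
          (∀ x : ℝ, p.eval (-x) = -p.eval x) ∧
          (p.natDegree : ℝ) ≤ C * (1 / δ) * Real.log (1 / (δ * ε)) ∧
          (∀ x : ℝ, x ∈ Set.Icc (-1 : ℝ) 1 → |p.eval x| ≤ 1) ∧
          (∀ x : ℝ, x ∈ Set.Icc (-(1 - δ)) (1 - δ) →
            |p.eval x - (2 / π) * Real.arcsin x| ≤ ε) := by
  refine ⟨4, by norm_num, fun δ ε hδ0 hδ1 hε0 hε1 => ?_⟩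
  have h2π : 0 < 2 / π := by positivity
  rcases le_or_gt (1 - δ) ε with hεδ | hεδ
  · refine ⟨0, by simp, ?_, by simp, fun x hx => ?_⟩
    · have : δ * ε ≤ 1 := by nlinarith
      simpa using mul_nonneg (by positivity) (log_nonneg (one_le_one_div (by positivity) this))
    have hx : |x| ≤ 1 - δ := abs_le.2 hx
    rw [eval_zero, zero_sub, abs_neg]
    exact (abs_two_div_pi_mul_arcsin_le (by linarith)).trans (hx.trans hεδ)
  set L := log (1 / (δ * ε))
  set n := ⌈L / (2 * δ)⌉₊
  have hL : 1 ≤ L := one_le_log_one_div_mul hδ0 hε0 hεδ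
  refine ⟨C (2 / π) * arcsinTaylor n, fun x => by simp [eval_neg_arcsinTaylor], ?_,
    fun x hx => ?_, fun x hx => ?_⟩
  · calc ((C (2 / π) * arcsinTaylor n).natDegree : ℝ) ≤ 2 * n + 1 := by
          exact_mod_cast (natDegree_C_mul_le _ _).trans (natDegree_arcsinTaylor_le n)
      _ ≤ 4 * (1 / δ) * L := two_mul_ceil_add_one_le hδ0 hδ1.le hL
  · rw [eval_C_mul, abs_mul, abs_of_pos h2π]
    calc 2 / π * |(arcsinTaylor n).eval x| ≤ 2 / π * (π / 2) := by
          gcongr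
          exact (abs_eval_arcsinTaylor_le_eval_one n (abs_le.2 hx)).trans
            (eval_one_arcsinTaylor_le n)
      _ = 1 := by field_simp
  · rw [eval_C_mul, ← mul_sub, abs_mul, abs_of_pos h2π, abs_sub_comm]
    calc 2 / π * |arcsin x - (arcsinTaylor n).eval x|
        ≤ 1 * ((1 - δ) ^ (2 * n + 2) / (1 - (1 - δ) ^ 2)) := by
          gcongr
          · exact (div_le_one pi_pos).2 (by linarith [two_le_pi])
          · exact abs_arcsin_sub_eval_arcsinTaylor_le n (by linarith) (abs_le.2 hx)
      _ ≤ ε := by rw [one_mul]; exact one_sub_pow_div_le hδ0 hδ1 hε0 (Nat.le_ceil _)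
end
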